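/- arXiv:1205.6359 — 3 statements merged into one kernel-verified Lean document; each statement's English description precedes it below -/
import Mathlib

section
/- Let (u,v) and (w,x) be two informative edges of a MUL-tree T lying on a path P_{u,x} = (u, v, …, w, x), and suppose Δ(u,v) ⊆ Δ(w,x). Then every internal edge lying in a subtree that branches out from P_{u,x} is contractible; indeed every such edge (a,b), with a its endpoint closer to the path, satisfies M_b^{ab} = ∅ and hence resolves no quartet. -/
/-!
Every edge of a tree splits it into two sides, and the sides of edges along a path are nested. The
far side of an edge `(a,b)` in a subtree branching off `P_{u,x}` therefore lies on the `v`-side of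
`(u,v)` and on the `w`-side of `(w,x)`, while the `u`-side of `(u,v)` lies on the `w`-side of
`(w,x)`. A label `ℓ ∈ M_b^{ab}` would then be exclusive to both of these sides; putting `ℓ` in place
of a `v`-side label of a quartet of `Δ(u,v)` gives a quartet that `(w,x)` cannot resolve,
contradicting `Δ(u,v) ⊆ Δ(w,x)`. Hence `M_b^{ab} = ∅` and `Δ(a,b) = ∅`.

Contracting an internal edge `(a,b)` of a tree (no triangles) maps the other edges bijectively
onto the edges of the contracted tree, preserving leaves and the leaves on each side; so it loses
exactly the quartets of `Δ(a,b)`, of which there are none.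
-/

open SimpleGraph

variable {V V' L L' : Type}

/-- Degree of a vertex, via `Set.ncard` of the neighbor set (no instances needed). -/
noncomputable def deg (G : SimpleGraph V) (v : V) : ℕ := (G.neighborSet v).ncard

/-- A leaf is a vertex of degree one. -/
def IsLeaf (G : SimpleGraph V) (v : V) : Prop := deg G v = 1

/-- The vertex set of the subtree `T_u^{uv}`: vertices reachable from `u`
after deleting the edge `(u,v)`. -/
def side (G : SimpleGraph V) (u v : V) : Set V :=
  {w | (G.deleteEdges {s(u, v)}).Reachable w u}

/-- Labels appearing on leaves of the `u`-side of the edge `(u,v)`. -/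
def sideLabels (G : SimpleGraph V) (ψ : V → L) (u v : V) : Set L :=
  {m | ∃ w, IsLeaf G w ∧ w ∈ side G u v ∧ ψ w = m}

/-- `M_u^{uv}`: labels appearing on leaves of `T_u^{uv}` but not of `T_v^{uv}`. -/
def Mside (G : SimpleGraph V) (ψ : V → L) (u v : V) : Set L :=
  sideLabels G ψ u v \ sideLabels G ψ v u

/-- `C^{uv}`: labels appearing on leaves of both sides of the edge `(u,v)`. -/
def Cside (G : SimpleGraph V) (ψ : V → L) (u v : V) : Set L :=
  sideLabels G ψ u v ∩ sideLabels G ψ v u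

/-- A quartet `ab|cd`: an unordered pair of unordered pairs of labels. -/
abbrev Quartet (L : Type) := Sym2 (Sym2 L)

/-- The edge `(u,v)` resolves the quartet `q = ab|cd` when `{a,b} ⊆ M_u^{uv}` and
`{c,d} ⊆ M_v^{uv}` (with `a,b,c,d` four distinct labels). -/
def Resolves (G : SimpleGraph V) (ψ : V → L) (u v : V) (q : Quartet L) : Prop :=
  G.Adj u v ∧ ∃ a b c d : L, a ≠ b ∧ c ≠ d ∧
    a ∈ Mside G ψ u v ∧ b ∈ Mside G ψ u v ∧
    c ∈ Mside G ψ v u ∧ d ∈ Mside G ψ v u ∧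
    q = s(s(a, b), s(c, d))

/-- `Δ(u,v)`: the set of quartets resolved by the edge `(u,v)`. -/
def Δ (G : SimpleGraph V) (ψ : V → L) (u v : V) : Set (Quartet L) :=
  {q | Resolves G ψ u v q}

/-- The information content `I(T)`: all quartets resolved by some edge. -/
def infoContent (G : SimpleGraph V) (ψ : V → L) : Set (Quartet L) :=
  {q | ∃ u v, Resolves G ψ u v q}

/-- The label set `M`: labels carried by the leaves. -/
def labelSet (G : SimpleGraph V) (ψ : V → L) : Set L :=
  {m | ∃ v, IsLeaf G v ∧ ψ v = m}

/-- Singly labeled: the labeling map is injective on leaves. -/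
def SinglyLabeled (G : SimpleGraph V) (ψ : V → L) : Prop :=
  ∀ v w, IsLeaf G v → IsLeaf G w → ψ v = ψ w → v = w

/-- A MUL-tree: a finite unrooted tree (encoded as the nontrivial connected component
of `G`; vertices outside `G.support` are unused isolated vertices) together with a
labeling `ψ` of its leaves, such that every internal (non-leaf) node has degree ≥ 3.
The label set `M` is `labelSet G ψ`, onto which `ψ` (restricted to leaves) is
automatically surjective. -/
structure MulTree (V L : Type) : Type where
  G : SimpleGraph V
  ψ : V → L
  fin : Finite V
  acyclic : G.IsAcyclic
  conn : ∀ u ∈ G.support, ∀ v ∈ G.support, G.Reachable u v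
  internal3 : ∀ v ∈ G.support, ¬ IsLeaf G v → 3 ≤ deg G v

/-- `y` lies on the (unique) path between `a` and `b`: `a,b` are connected and
every walk from `a` to `b` passes through `y`. -/
def OnPath (G : SimpleGraph V) (y a b : V) : Prop :=
  G.Reachable a b ∧ ∀ p : G.Walk a b, y ∈ p.support

/-- The edges `(u,v)` and `(w,x)` lie, in this order, on the path
`P_{u,x} = (u, v, …, w, x)` (possibly `v = w`). -/
def PathConfig (G : SimpleGraph V) (u v w x : V) : Prop :=
  G.Adj u v ∧ G.Adj w x ∧ OnPath G v u x ∧ OnPath G w v x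

/-- An internal edge: both endpoints are internal (non-leaf) nodes. -/
def InternalEdge (G : SimpleGraph V) (a b : V) : Prop :=
  G.Adj a b ∧ ¬ IsLeaf G a ∧ ¬ IsLeaf G b

/-- Contracting the edge `(a,b)`: identify `b` with `a` (the vertex `b` becomes
an unused isolated vertex). -/
def contractEdge (G : SimpleGraph V) (a b : V) : SimpleGraph V where
  Adj x y := x ≠ y ∧ x ≠ b ∧ y ≠ b ∧
    (G.Adj x y ∨ (x = a ∧ G.Adj b y) ∨ (y = a ∧ G.Adj x b))
  symm := by
    constructor
    rintro x y ⟨h1, h2, h3, h4 | ⟨hx, hy⟩ | ⟨hy, hx⟩⟩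
    · exact ⟨h1.symm, h3, h2, Or.inl h4.symm⟩
    · exact ⟨h1.symm, h3, h2, Or.inr (Or.inr ⟨hx, hy.symm⟩)⟩
    · exact ⟨h1.symm, h3, h2, Or.inr (Or.inl ⟨hy, hx.symm⟩)⟩
  loopless := ⟨fun x h => h.1 rfl⟩

/-- `PruneSpec G v₀ G'` : `G'` is the result of pruning the leaf `v₀` from `G`:
delete `v₀` (i.e. its unique edge); if as a result the neighbor `u` of `v₀`
becomes a degree-two node, additionally delete `u` and connect its former two
other neighbors by an edge. Deleted vertices become unused isolated vertices. -/
def PruneSpec (G : SimpleGraph V) (v₀ : V) (G' : SimpleGraph V) : Prop :=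
  ∃ u, G.neighborSet v₀ = {u} ∧
    ((deg G u ≠ 3 ∧ G' = G.deleteEdges {s(u, v₀)}) ∨
     (deg G u = 3 ∧ ∃ p q, p ≠ q ∧ p ≠ v₀ ∧ q ≠ v₀ ∧
        G.neighborSet u = {v₀, p, q} ∧
        G' = G.deleteEdges {s(u, v₀), s(u, p), s(u, q)} ⊔ fromEdgeSet {s(p, q)}))

/-- A leaf is prunable if pruning it leaves the information content unchanged. -/
def Prunable (G : SimpleGraph V) (ψ : V → L) (v₀ : V) : Prop :=
  IsLeaf G v₀ ∧ ∃ G', PruneSpec G v₀ G' ∧ infoContent G' ψ = infoContent G ψ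

/-- An internal edge is contractible if contracting it leaves the information
content unchanged. -/
def Contractible (G : SimpleGraph V) (ψ : V → L) (a b : V) : Prop :=
  InternalEdge G a b ∧ infoContent (contractEdge G a b) ψ = infoContent G ψ

/-- Maximally reduced: no prunable leaf and no contractible internal edge. -/
def MaximallyReduced (G : SimpleGraph V) (ψ : V → L) : Prop :=
  (∀ v, ¬ Prunable G ψ v) ∧ (∀ a b, ¬ Contractible G ψ a b)

/-- One reduction step: prune a prunable leaf or contract a contractible
internal edge. -/
def ReduceStep (ψ : V → L) (G G' : SimpleGraph V) : Prop :=
  (∃ v₀, Prunable G ψ v₀ ∧ PruneSpec G v₀ G') ∨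
  (∃ a b, Contractible G ψ a b ∧ G' = contractEdge G a b)

/-- `H` is a maximally reduced form (MRF) of `G`: obtained from `G` by repeatedly
pruning prunable leaves and contracting contractible internal edges, until
neither operation is possible. -/
def IsMRF (ψ : V → L) (G H : SimpleGraph V) : Prop :=
  Relation.ReflTransGen (ReduceStep ψ) G H ∧ MaximallyReduced H ψ

/-- Label-preserving isomorphism of (leaf-labeled) trees: a graph isomorphism
between the supports mapping leaves to leaves and preserving leaf labels. -/
def LIso (G : SimpleGraph V) (ψ : V → L) (G' : SimpleGraph V') (ψ' : V' → L) : Prop :=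
  ∃ f : G.support ≃ G'.support,
    (∀ x y : G.support, G'.Adj (f x).1 (f y).1 ↔ G.Adj x.1 y.1) ∧
    (∀ x : G.support, IsLeaf G x.1 → IsLeaf G' (f x).1 ∧ ψ' (f x).1 = ψ x.1)

/-- The set of internal edges of `G`, as unordered pairs. -/
def internalEdgeSet (G : SimpleGraph V) : Set (Sym2 V) :=
  {e | ∃ a b, e = s(a, b) ∧ InternalEdge G a b}

/-- The subtree `T_z^{yz}` branches out from the path `P_{u,x}` :
`y` is an interior vertex of the path and `z` is off the path. -/
def BranchesOut (G : SimpleGraph V) (u x y z : V) : Prop :=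
  G.Adj y z ∧ OnPath G y u x ∧ y ≠ u ∧ y ≠ x ∧ ¬ OnPath G z u x

/-- Vertices of the minimal subtree spanning all leaves labeled `ℓ`. -/
def spanVerts (G : SimpleGraph V) (ψ : V → L) (ℓ : L) : Set V :=
  {p | ∃ c d, IsLeaf G c ∧ IsLeaf G d ∧ ψ c = ℓ ∧ ψ d = ℓ ∧ OnPath G p c d}

/-- Degree of `y` within the subtree induced on the vertex set `S`. -/
noncomputable def degIn (G : SimpleGraph V) (S : Set V) (y : V) : ℕ :=
  (G.neighborSet y ∩ S).ncard

/-- One step of deleting a leaf labeled `ℓ` (by pruning, with suppression). -/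
def PruneLabelStep (ψ : V → L) (ℓ : L) (G G' : SimpleGraph V) : Prop :=
  ∃ v₀, IsLeaf G v₀ ∧ ψ v₀ = ℓ ∧ PruneSpec G v₀ G'

section Sides

variable {G : SimpleGraph V} {a b p q s t u v w x y z : V}

theorem SimpleGraph.Reachable.map_of_forall_adj {W : Type} {H : SimpleGraph W} {f : V → W}
    (hf : ∀ ⦃x y⦄, G.Adj x y → H.Reachable (f x) (f y)) (h : G.Reachable s t) :
    H.Reachable (f s) (f t) := by
  rw [reachable_iff_reflTransGen] at h ⊢
  exact Relation.ReflTransGen.lift' f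
    (fun x y hxy => (reachable_iff_reflTransGen _ _).mp (hf hxy)) _ _ h

theorem mem_support_of_isLeaf (h : IsLeaf G s) : s ∈ G.support :=
  Set.nonempty_of_ncard_ne_zero (s := G.neighborSet s)
    (by rw [show (G.neighborSet s).ncard = 1 from h]; exact one_ne_zero)

theorem side_def_swap : side G q p = {w | (G.deleteEdges {s(p, q)}).Reachable w q} := by
  simp only [side, Sym2.eq_swap]

theorem disjoint_side (hG : G.IsAcyclic) (hpq : G.Adj p q) :
    Disjoint (side G p q) (side G q p) := by
  rw [Set.disjoint_left, side_def_swap (p := p)]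
  exact fun s hp hq => isAcyclic_iff_forall_adj_isBridge.mp hG hpq (hp.symm.trans hq)

theorem mem_side_of_adj (hs : s ∈ side G p q) (hst : G.Adj s t) (hne : s(s, t) ≠ s(p, q)) :
    t ∈ side G p q :=
  (deleteEdges_adj.mpr ⟨hst.symm, by simpa [Sym2.eq_swap] using hne⟩).reachable.trans hs

theorem mem_side_or_mem_side (h : G.Reachable s p) (q : V) :
    s ∈ side G p q ∨ s ∈ side G q p := by
  rw [reachable_iff_reflTransGen] at h
  induction h using Relation.ReflTransGen.head_induction_on with
  | refl => exact Or.inl .rfl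
  | @head s s' hss' _ ih =>
    by_cases he : s(s', s) = s(p, q)
    · rcases Sym2.eq_iff.mp he with ⟨-, rfl⟩ | ⟨-, rfl⟩
      · exact Or.inr .rfl
      · exact Or.inl .rfl
    · exact ih.imp (mem_side_of_adj · hss'.symm he)
        (mem_side_of_adj · hss'.symm (by rwa [Sym2.eq_swap (a := q)]))

theorem reachable_deleteEdges_of_not_reachable (h : G.Reachable s t) (hy : ¬G.Reachable y t) :
    (G.deleteEdges {s(y, z)}).Reachable s t := by
  rw [reachable_iff_reflTransGen] at h
  induction h using Relation.ReflTransGen.head_induction_on with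
  | refl => exact .rfl
  | @head s s' hss' hs't ih =>
    rw [← reachable_iff_reflTransGen] at hs't
    refine (deleteEdges_adj.mpr ⟨hss', ?_⟩).reachable.trans ih
    rintro he
    rcases Sym2.eq_iff.mp he with ⟨rfl, -⟩ | ⟨-, rfl⟩
    · exact hy (hss'.reachable.trans hs't)
    · exact hy hs't

theorem side_subset_side (hb : b ∈ side G z y) (hy : y ∉ side G b a) :
    side G b a ⊆ side G z y := fun s hs =>
  ((reachable_deleteEdges_of_not_reachable (z := z) hs hy).mono
    (by rw [deleteEdges_deleteEdges, Sym2.eq_swap]; exact deleteEdges_anti (by simp))).trans hb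

theorem OnPath.symm (h : OnPath G y s t) : OnPath G y t s :=
  ⟨h.1.symm, fun p => by simpa using h.2 p.reverse⟩

theorem OnPath.trans (h₁ : OnPath G v u x) (h₂ : OnPath G w v x) : OnPath G w u x := by
  classical
  exact ⟨h₁.1, fun p => p.support_dropUntil_subset_support (h₁.2 p) (h₂.2 (p.dropUntil v (h₁.2 p)))⟩

theorem mem_side_of_onPath (hG : G.IsAcyclic) (huv : G.Adj u v) (hv : OnPath G v u x) :
    x ∈ side G v u := by
  classical
  refine (mem_side_or_mem_side (hv.1.symm.trans huv.reachable) u).resolve_right ?_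
  rintro ⟨W⟩
  have hvW : v ∈ W.support := by
    simpa using hv.2 (W.reverse.mapLe (deleteEdges_le _))
  exact Set.disjoint_left.mp (disjoint_side hG huv) (Reachable.refl u)
    (by rw [side_def_swap]; exact ⟨(W.dropUntil v hvW).reverse⟩)

theorem mem_side_of_onPath_of_mem_side (huv : G.Adj u v) (hx : x ∈ side G v u)
    (hy : OnPath G y u x) (hyu : y ≠ u) : y ∈ side G v u := by
  classical
  obtain ⟨W⟩ := hx
  have hyW : y ∈ W.support := by
    simpa [hyu] using hy.2 (.cons huv (W.reverse.mapLe (deleteEdges_le _)))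
  exact ⟨W.dropUntil y hyW⟩

theorem start_mem_side_of_notMem_support (W : G.Walk s t) (hz : z ∉ W.support)
    (hy : y ∈ W.support) : s ∈ side G y z := by
  classical
  let W' := W.toDeleteEdges {s(y, z)} fun e he hez => by
    rw [Set.mem_singleton_iff] at hez
    subst hez
    exact hz (W.snd_mem_support_of_mem_edges he)
  exact ⟨W'.takeUntil y (by simpa [W'] using hy)⟩

theorem BranchesOut.symm (h : BranchesOut G u x y z) : BranchesOut G x u y z :=
  ⟨h.1, h.2.1.symm, h.2.2.2.1, h.2.2.1, fun hz => h.2.2.2.2 hz.symm⟩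

theorem side_subset_side_of_branchesOut (hG : G.IsAcyclic) (huv : G.Adj u v)
    (hv : OnPath G v u x) (hbr : BranchesOut G u x y z) : side G z y ⊆ side G v u := by
  obtain ⟨hyz, hy, hyu, -, hz⟩ := hbr
  obtain ⟨W, hzW⟩ : ∃ W : G.Walk u x, z ∉ W.support := by
    by_contra! h
    exact hz ⟨hv.1, h⟩
  have hzu : z ≠ u := fun h => hzW (h ▸ W.start_mem_support)
  have hzv : z ≠ v := fun h => hzW (h ▸ hv.2 W)
  have hyv : y ∈ side G v u :=
    mem_side_of_onPath_of_mem_side huv (mem_side_of_onPath hG huv hv) hy hyu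
  have hzv' : z ∈ side G v u := mem_side_of_adj hyv hyz (by simp [hzu, hzv])
  have huy : u ∈ side G y z := start_mem_side_of_notMem_support W hzW (hy.2 W)
  exact side_subset_side hzv' (Set.disjoint_left.mp (disjoint_side hG hyz) huy)

end Sides

section Labels

variable {G : SimpleGraph V} {ψ : V → L} {u v w x : V} {q : Quartet L}

theorem Resolves.Mside_nonempty (h : Resolves G ψ u v q) :
    (Mside G ψ u v).Nonempty ∧ (Mside G ψ v u).Nonempty := by
  obtain ⟨-, α, -, γ, -, -, -, hα, -, hγ, -⟩ := h
  exact ⟨⟨α, hα⟩, ⟨γ, hγ⟩⟩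

theorem Δ_eq_empty_of_Mside_eq_empty (h : Mside G ψ v u = ∅) : Δ G ψ u v = ∅ :=
  Set.eq_empty_of_forall_notMem fun _ hq => hq.Mside_nonempty.2.ne_empty h

theorem sideLabels_mono (h : side G u v ⊆ side G w x) :
    sideLabels G ψ u v ⊆ sideLabels G ψ w x := fun _ ⟨f, hf, hfs, hfℓ⟩ => ⟨f, hf, h hfs, hfℓ⟩

theorem disjoint_Mside_of_Δ_subset (hne : (Δ G ψ u v).Nonempty) (hsub : Δ G ψ u v ⊆ Δ G ψ w x)
    (hlab : sideLabels G ψ u v ⊆ sideLabels G ψ w x) :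
    Disjoint (Mside G ψ v u) (Mside G ψ w x) := by
  rw [Set.disjoint_left]
  intro ℓ hℓv hℓw
  obtain ⟨_, huv, α, β, γ, δ, hαβ, hγδ, hα, hβ, hγ, hδ, -⟩ := hne
  obtain ⟨γ', hγ', hγ'ℓ⟩ : ∃ γ' ∈ Mside G ψ v u, γ' ≠ ℓ := by
    by_cases hγℓ : γ = ℓ
    · exact ⟨δ, hδ, fun h => hγδ (hγℓ.trans h.symm)⟩
    · exact ⟨γ, hγ, hγℓ⟩
  obtain ⟨-, _, _, γ'', δ', -, -, -, -, hγ'', hδ', heq⟩ :=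
    hsub ⟨huv, α, β, γ', ℓ, hαβ, hγ'ℓ, hα, hβ, hγ', hℓv, rfl⟩
  have hx : ∀ m ∈ s(γ'', δ'), m ∉ sideLabels G ψ w x := by
    rintro m hm
    rcases Sym2.mem_iff.mp hm with rfl | rfl
    exacts [hγ''.2, hδ'.2]
  rcases Sym2.eq_iff.mp heq with ⟨-, h⟩ | ⟨h, -⟩
  · exact hx ℓ (h ▸ Sym2.mem_mk_right _ _) hℓw.1
  · exact hx α (h ▸ Sym2.mem_mk_left _ _) (hlab hα.1)

theorem Mside_subset_Mside (T : MulTree V L) {a b : V} (hab : T.G.Adj a b) (huv : T.G.Adj u v)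
    (h : side T.G b a ⊆ side T.G v u) : Mside T.G T.ψ b a ⊆ Mside T.G T.ψ v u := by
  rintro ℓ ⟨hℓb, hℓa⟩
  refine ⟨sideLabels_mono h hℓb, ?_⟩
  rintro ⟨f, hf, hfu, rfl⟩
  have hfa : T.G.Reachable f a := T.conn f (mem_support_of_isLeaf hf) a ⟨b, hab⟩
  have hfb : f ∈ side T.G b a :=
    (mem_side_or_mem_side hfa b).resolve_left fun hfa => hℓa ⟨f, hf, hfa, rfl⟩
  exact Set.disjoint_left.mp (disjoint_side T.acyclic huv) hfu (h hfb)

end Labels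

section Contraction

variable {G : SimpleGraph V} {a b c p r s : V}

theorem SimpleGraph.IsAcyclic.not_adj_of_adj_of_adj (hG : G.IsAcyclic) (hab : G.Adj a b)
    (hca : G.Adj c a) : ¬G.Adj c b := fun hcb =>
  isAcyclic_iff_forall_adj_isBridge.mp hG hab <|
    (deleteEdges_adj.mpr ⟨hca.symm, by simp [hcb.ne, hca.ne]⟩).reachable.trans
      (deleteEdges_adj.mpr ⟨hcb, by simp [hca.ne, hcb.ne]⟩).reachable

theorem contractEdge_adj {x y : V} : (contractEdge G a b).Adj x y ↔
    x ≠ y ∧ x ≠ b ∧ y ≠ b ∧ (G.Adj x y ∨ (x = a ∧ G.Adj b y) ∨ (y = a ∧ G.Adj x b)) :=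
  Iff.rfl

theorem exists_adj_ne_of_not_isLeaf (hac : G.Adj a c) (ha : ¬IsLeaf G a) :
    ∃ d, G.Adj a d ∧ d ≠ c := by
  by_contra! h
  exact ha (Set.ncard_eq_one.mpr ⟨c, Set.eq_singleton_iff_unique_mem.mpr ⟨hac, h⟩⟩)

open Classical in
noncomputable def contractMap (a b s : V) : V := if s = b then a else s

@[simp] theorem contractMap_self : contractMap a b b = a := if_pos rfl

theorem contractMap_of_ne (h : s ≠ b) : contractMap a b s = s := if_neg h

theorem contractEdge_adj_contractMap (hab : a ≠ b) (hpr : G.Adj p r) (hne : s(p, r) ≠ s(a, b)) :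
    (contractEdge G a b).Adj (contractMap a b p) (contractMap a b r) := by
  by_cases hp : p = b
  · subst hp
    have hr : r ≠ p := hpr.ne'
    have hra : r ≠ a := by rintro rfl; exact hne Sym2.eq_swap
    simp [contractEdge_adj, contractMap_of_ne hr, hab, hr, hra.symm, hpr]
  by_cases hr : r = b
  · subst hr
    have hpa : p ≠ a := by rintro rfl; exact hne rfl
    simp [contractEdge_adj, contractMap_of_ne hp, hab, hp, hpa, hpr]
  · simp [contractEdge_adj, contractMap_of_ne hp, contractMap_of_ne hr, hp, hr, hpr, hpr.ne]

theorem exists_of_contractEdge_adj {x y : V} (h : (contractEdge G a b).Adj x y) :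
    ∃ x' y', G.Adj x' y' ∧ contractMap a b x' = x ∧ contractMap a b y' = y := by
  obtain ⟨-, hx, hy, hxy | ⟨rfl, hby⟩ | ⟨rfl, hxb⟩⟩ := h
  · exact ⟨x, y, hxy, contractMap_of_ne hx, contractMap_of_ne hy⟩
  · exact ⟨b, y, hby, contractMap_self, contractMap_of_ne hy⟩
  · exact ⟨x, b, hxb, contractMap_of_ne hx, contractMap_self⟩

theorem map_contractMap_injOn (hG : G.IsAcyclic) (hab : G.Adj a b) :
    Set.InjOn (Sym2.map (contractMap a b)) (G.edgeSet \ {s(a, b)}) := by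
  have normal : ∀ e ∈ G.edgeSet, ∃ x y, e = s(x, y) ∧ G.Adj x y ∧ y ≠ b := by
    refine Sym2.ind fun x y (hxy : G.Adj x y) => ?_
    by_cases hy : y = b
    · exact ⟨y, x, Sym2.eq_swap, hxy.symm, hy ▸ hxy.ne⟩
    · exact ⟨x, y, rfl, hxy, hy⟩
  -- the only way two distinct edges get identified is `s(a, y)`, `s(b, y)`: a triangle
  have triangle : ∀ y p r, G.Adj b y → s(a, y) = s(p, r) → G.Adj p r → p ≠ b → False := by
    rintro y p r hby h hpr hp
    rcases Sym2.eq_iff.mp h with ⟨rfl, rfl⟩ | ⟨rfl, rfl⟩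
    · exact hG.not_adj_of_adj_of_adj hab hpr.symm hby.symm
    · exact hG.not_adj_of_adj_of_adj hab hpr hby.symm
  rintro e₁ ⟨he₁, hne₁⟩ e₂ ⟨he₂, hne₂⟩ h
  obtain ⟨x, y, rfl, hxy, hy⟩ := normal e₁ he₁
  obtain ⟨p, r, rfl, hpr, hr⟩ := normal e₂ he₂
  simp only [Sym2.map_mk, contractMap_of_ne hy, contractMap_of_ne hr] at h
  by_cases hx : x = b <;> by_cases hp : p = b
  · subst hx hp
    rw [Sym2.congr_right.mp h]
  · subst hx
    rw [contractMap_self, contractMap_of_ne hp] at h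
    exact (triangle y p r hxy h hpr hp).elim
  · subst hp
    rw [contractMap_self, contractMap_of_ne hx, eq_comm] at h
    exact (triangle r x y hpr h hxy hx).elim
  · rwa [contractMap_of_ne hx, contractMap_of_ne hp] at h

theorem reachable_contractMap {H : SimpleGraph V} (hab : H.Adj a b) (s : V) :
    H.Reachable (contractMap a b s) s := by
  by_cases hs : s = b
  · subst hs
    rw [contractMap_self]
    exact hab.reachable
  · rw [contractMap_of_ne hs]

theorem mem_side_contractEdge_iff (hG : G.IsAcyclic) (hab : G.Adj a b) (hpr : G.Adj p r)
    (hne : s(p, r) ≠ s(a, b)) (hs : s ≠ b) :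
    s ∈ side (contractEdge G a b) (contractMap a b p) (contractMap a b r) ↔ s ∈ side G p r := by
  have hab' : (G.deleteEdges {s(p, r)}).Adj a b := deleteEdges_adj.mpr ⟨hab, Ne.symm hne⟩
  constructor
  · refine fun h => (Reachable.map_of_forall_adj (f := id) (fun x y hxy => ?_) h).trans
      (reachable_contractMap hab' p)
    obtain ⟨hxy, hne'⟩ := deleteEdges_adj.mp hxy
    obtain ⟨x, y, hxy', rfl, rfl⟩ := exists_of_contractEdge_adj hxy
    refine (reachable_contractMap hab' x).trans (Adj.reachable ?_ |>.trans
      (reachable_contractMap hab' y).symm)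
    refine deleteEdges_adj.mpr ⟨hxy', fun h => hne' ?_⟩
    rw [Set.mem_singleton_iff] at h ⊢
    rw [← Sym2.map_mk, h, Sym2.map_mk]
  · intro h
    rw [← contractMap_of_ne (a := a) hs]
    refine Reachable.map_of_forall_adj (fun x y hxy => ?_) h
    obtain ⟨hxy, hne'⟩ := deleteEdges_adj.mp hxy
    by_cases hxyab : s(x, y) = s(a, b)
    · rcases Sym2.eq_iff.mp hxyab with ⟨rfl, rfl⟩ | ⟨rfl, rfl⟩ <;>
        simp [contractMap_of_ne hab.ne]
    refine (deleteEdges_adj.mpr ⟨contractEdge_adj_contractMap hab.ne hxy hxyab, ?_⟩).reachable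
    rw [Set.mem_singleton_iff] at hne' ⊢
    exact fun h => hne' (map_contractMap_injOn hG hab ⟨hxy, hxyab⟩ ⟨hpr, hne⟩ (by simpa using h))

theorem neighborSet_contractEdge_of_ne (hab : a ≠ b) (hsa : s ≠ a) (hsb : s ≠ b) :
    (contractEdge G a b).neighborSet s = contractMap a b '' G.neighborSet s := by
  ext t
  simp only [mem_neighborSet, contractEdge_adj, Set.mem_image]
  constructor
  · rintro ⟨-, -, htb, hst | ⟨rfl, -⟩ | ⟨rfl, hsb'⟩⟩
    · exact ⟨t, hst, contractMap_of_ne htb⟩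
    · exact absurd rfl hsa
    · exact ⟨b, hsb', contractMap_self⟩
  · rintro ⟨c, hsc, rfl⟩
    by_cases hc : c = b
    · rw [hc] at hsc ⊢
      rw [contractMap_self]
      exact ⟨hsa, hsb, hab, Or.inr (Or.inr ⟨rfl, hsc⟩)⟩
    · rw [contractMap_of_ne hc]
      exact ⟨hsc.ne, hsb, hc, Or.inl hsc⟩

theorem deg_contractEdge_of_ne (hG : G.IsAcyclic) (hab : G.Adj a b) (hsa : s ≠ a) (hsb : s ≠ b) :
    deg (contractEdge G a b) s = deg G s := by
  rw [deg, deg, neighborSet_contractEdge_of_ne hab.ne hsa hsb]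
  have hne : ∀ c, s(s, c) ∉ ({s(a, b)} : Set (Sym2 V)) := by simp [hsa, hsb]
  refine Set.InjOn.ncard_image fun c hc d hd h => (Sym2.congr_right (a := s)).mp ?_
  exact map_contractMap_injOn hG hab (⟨hc, hne c⟩ : s(s, c) ∈ G.edgeSet \ {s(a, b)})
    (⟨hd, hne d⟩ : s(s, d) ∈ G.edgeSet \ {s(a, b)}) (by simp [h])

theorem not_isLeaf_contractEdge_left (hG : G.IsAcyclic) (hab : G.Adj a b) (ha : ¬IsLeaf G a)
    (hb : ¬IsLeaf G b) : ¬IsLeaf (contractEdge G a b) a := by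
  obtain ⟨c, hac, hcb⟩ := exists_adj_ne_of_not_isLeaf hab ha
  obtain ⟨d, hbd, hda⟩ := exists_adj_ne_of_not_isLeaf hab.symm hb
  intro h
  obtain ⟨t, ht⟩ := Set.ncard_eq_one.mp h
  have hc : c ∈ (contractEdge G a b).neighborSet a := ⟨hac.ne, hab.ne, hcb, Or.inl hac⟩
  have hd : d ∈ (contractEdge G a b).neighborSet a :=
    ⟨hda.symm, hab.ne, hbd.ne', Or.inr (Or.inl ⟨rfl, hbd⟩)⟩
  rw [ht, Set.mem_singleton_iff] at hc hd
  subst hc hd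
  exact hG.not_adj_of_adj_of_adj hab hac.symm hbd.symm

theorem isLeaf_contractEdge_iff (hG : G.IsAcyclic) (hab : G.Adj a b) (ha : ¬IsLeaf G a)
    (hb : ¬IsLeaf G b) : IsLeaf (contractEdge G a b) s ↔ IsLeaf G s := by
  by_cases hsb : s = b
  · subst hsb
    refine iff_of_false (fun h => ?_) hb
    have : (contractEdge G a s).neighborSet s = ∅ :=
      Set.eq_empty_of_forall_notMem fun t ht => ht.2.1 rfl
    simp [IsLeaf, deg, this] at h
  by_cases hsa : s = a
  · subst hsa
    exact iff_of_false (not_isLeaf_contractEdge_left hG hab ha hb) ha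
  · rw [IsLeaf, IsLeaf, deg_contractEdge_of_ne hG hab hsa hsb]

theorem sideLabels_contractEdge (hG : G.IsAcyclic) (hab : G.Adj a b) (ha : ¬IsLeaf G a)
    (hb : ¬IsLeaf G b) (hpr : G.Adj p r) (hne : s(p, r) ≠ s(a, b)) (ψ : V → L) :
    sideLabels (contractEdge G a b) ψ (contractMap a b p) (contractMap a b r) =
      sideLabels G ψ p r := by
  ext ℓ
  refine exists_congr fun f => ⟨fun ⟨hf, hfs, hfℓ⟩ => ?_, fun ⟨hf, hfs, hfℓ⟩ => ?_⟩
  · rw [isLeaf_contractEdge_iff hG hab ha hb] at hf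
    have hfb : f ≠ b := by rintro rfl; exact hb hf
    exact ⟨hf, (mem_side_contractEdge_iff hG hab hpr hne hfb).mp hfs, hfℓ⟩
  · have hfb : f ≠ b := by rintro rfl; exact hb hf
    exact ⟨(isLeaf_contractEdge_iff hG hab ha hb).mpr hf,
      (mem_side_contractEdge_iff hG hab hpr hne hfb).mpr hfs, hfℓ⟩

theorem Mside_contractEdge (hG : G.IsAcyclic) (hab : G.Adj a b) (ha : ¬IsLeaf G a)
    (hb : ¬IsLeaf G b) (hpr : G.Adj p r) (hne : s(p, r) ≠ s(a, b)) (ψ : V → L) :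
    Mside (contractEdge G a b) ψ (contractMap a b p) (contractMap a b r) = Mside G ψ p r := by
  rw [Mside, Mside, sideLabels_contractEdge hG hab ha hb hpr hne,
    sideLabels_contractEdge hG hab ha hb hpr.symm (by rwa [Sym2.eq_swap])]

theorem resolves_contractEdge_iff (hG : G.IsAcyclic) (hab : G.Adj a b) (ha : ¬IsLeaf G a)
    (hb : ¬IsLeaf G b) (hpr : G.Adj p r) (hne : s(p, r) ≠ s(a, b)) {ψ : V → L} {q : Quartet L} :
    Resolves (contractEdge G a b) ψ (contractMap a b p) (contractMap a b r) q ↔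
      Resolves G ψ p r q := by
  rw [Resolves, Resolves, Mside_contractEdge hG hab ha hb hpr hne,
    Mside_contractEdge hG hab ha hb hpr.symm (by rwa [Sym2.eq_swap])]
  exact and_congr_left fun _ => iff_of_true (contractEdge_adj_contractMap hab.ne hpr hne) hpr

theorem infoContent_contractEdge {ψ : V → L} (hG : G.IsAcyclic) (hab : G.Adj a b)
    (ha : ¬IsLeaf G a) (hb : ¬IsLeaf G b) (hM : Mside G ψ b a = ∅) :
    infoContent (contractEdge G a b) ψ = infoContent G ψ := by
  ext q
  constructor
  · rintro ⟨_, _, hq⟩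
    obtain ⟨p, r, hpr, rfl, rfl⟩ := exists_of_contractEdge_adj hq.1
    have hne : s(p, r) ≠ s(a, b) := fun h => hq.1.1 <| by
      rcases Sym2.eq_iff.mp h with ⟨rfl, rfl⟩ | ⟨rfl, rfl⟩ <;> simp [contractMap_of_ne hab.ne]
    exact ⟨p, r, (resolves_contractEdge_iff hG hab ha hb hpr hne).mp hq⟩
  · rintro ⟨p, r, hq⟩
    by_cases hne : s(p, r) = s(a, b)
    · rcases Sym2.eq_iff.mp hne with ⟨rfl, rfl⟩ | ⟨rfl, rfl⟩
      · exact (hq.Mside_nonempty.2.ne_empty hM).elim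
      · exact (hq.Mside_nonempty.1.ne_empty hM).elim
    · exact ⟨_, _, (resolves_contractEdge_iff hG hab ha hb hq.1 hne).mpr hq⟩

end Contraction

theorem stmt10_general (T : MulTree V L) (u v w x : V) (h : PathConfig T.G u v w x)
    (h1 : (Δ T.G T.ψ u v).Nonempty)
    (hsub : Δ T.G T.ψ u v ⊆ Δ T.G T.ψ w x)
    (y z a b : V) (hbr : BranchesOut T.G u x y z)
    (hab : T.G.Adj a b) (hb : b ∈ side T.G z y)
    (hor : y ∈ side T.G a b) :
    Mside T.G T.ψ b a = ∅ ∧ Δ T.G T.ψ a b = ∅ ∧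
      (InternalEdge T.G a b → Contractible T.G T.ψ a b) := by
  obtain ⟨huv, hwx, hv, hw⟩ := h
  have hG := T.acyclic
  have hw' : OnPath T.G w x u := (hv.trans hw).symm
  have hzy_v := side_subset_side_of_branchesOut hG huv hv hbr
  have hzy_w := side_subset_side_of_branchesOut hG hwx.symm hw' hbr.symm
  have huv_w : side T.G u v ⊆ side T.G w x :=
    side_subset_side (mem_side_of_onPath hG hwx.symm hw')
      (Set.disjoint_right.mp (disjoint_side hG huv) (mem_side_of_onPath hG huv hv))
  have hba : side T.G b a ⊆ side T.G z y :=
    side_subset_side hb (Set.disjoint_left.mp (disjoint_side hG hab) hor)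
  have hM : Mside T.G T.ψ b a = ∅ := Set.subset_empty_iff.mp fun ℓ hℓ =>
    Set.disjoint_left.mp (disjoint_Mside_of_Δ_subset h1 hsub (sideLabels_mono huv_w))
      (Mside_subset_Mside T hab huv (hba.trans hzy_v) hℓ)
      (Mside_subset_Mside T hab hwx.symm (hba.trans hzy_w) hℓ)
  exact ⟨hM, Δ_eq_empty_of_Mside_eq_empty hM,
    fun hint => ⟨hint, infoContent_contractEdge hG hab hint.2.1 hint.2.2 hM⟩⟩

/-- If `(u,v)` and `(w,x)` are informative edges on a path `P_{u,x}`
with `Δ(u,v) ⊆ Δ(w,x)`, then every internal edge in a subtree branching out from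
`P_{u,x}` is contractible; indeed every such edge `(a,b)` (with `a` the endpoint
closer to the path) satisfies `M_b^{ab} = ∅` and resolves no quartet. -/
theorem stmt10 (T : MulTree V L) (u v w x : V) (h : PathConfig T.G u v w x)
    (h1 : (Δ T.G T.ψ u v).Nonempty) (h2 : (Δ T.G T.ψ w x).Nonempty)
    (hsub : Δ T.G T.ψ u v ⊆ Δ T.G T.ψ w x)
    (y z a b : V) (hbr : BranchesOut T.G u x y z)
    (hab : T.G.Adj a b) (ha : a ∈ side T.G z y) (hb : b ∈ side T.G z y)
    (hor : y ∈ side T.G a b) :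
    Mside T.G T.ψ b a = ∅ ∧ Δ T.G T.ψ a b = ∅ ∧
      (InternalEdge T.G a b → Contractible T.G T.ψ a b) :=
  stmt10_general T u v w x h h1 hsub y z a b hbr hab hb hor
end

section
/- Let T and T' be maximally reduced MUL-trees with I(T) = I(T'). Then there is a bijection φ between the set of internal edges of T and the set of internal edges of T' with the following property: if (u,v) is an internal edge of T and (u',v') = φ(u,v), then (after suitable orientation) M_u^{uv} = M_{u'}^{u'v'} and M_v^{uv} = M_{v'}^{u'v'}; in particular Δ(u,v) = Δ(u',v'). -/
/-!
Contracting an internal edge `e` of a tree does not change the sides of any other edge, so it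
removes from `I(T)` exactly the quartets that `e` alone resolves. In a maximally reduced tree every
internal edge `(u,v)` is therefore the only edge resolving some quartet `ab|cd`, and such a quartet
lets `I(T)` determine the sides of `(u,v)`: `M_u^{uv} = {a, b} ∪ {ℓ ≠ a | aℓ|cd ∈ I(T)}`.
Consequently the internal edges of `T` and of `T'` carry the same pairs `{M_u^{uv}, M_v^{uv}}`, and
within one maximally reduced tree this pair determines the edge, because any edge with the same
pair also resolves the private quartet of `(u,v)`.
-/

open SimpleGraph

variable {V V' L L' : Type}

section Sides

variable {G : SimpleGraph V} {ψ : V → L} {u v w x z : V}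

lemma deleteEdges_adj_of_ne {a b : V} (h : G.Adj a b) (hne : s(a, b) ≠ s(u, v)) :
    (G.deleteEdges {s(u, v)}).Adj a b :=
  deleteEdges_adj.mpr ⟨h, hne⟩

lemma mem_side_swap_iff : z ∈ side G v u ↔ (G.deleteEdges {s(u, v)}).Reachable z v := by
  show (G.deleteEdges {s(v, u)}).Reachable z v ↔ _
  rw [Sym2.eq_swap]

lemma reachable_of_mem_side (h : z ∈ side G u v) : G.Reachable z u :=
  h.mono (deleteEdges_le _)

lemma mem_side_of_adj_s12 {y : V} (hz : z ∈ side G u v) (hzy : G.Adj z y)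
    (hne : s(z, y) ≠ s(u, v)) : y ∈ side G u v :=
  (deleteEdges_adj_of_ne hzy.symm (by rwa [Sym2.eq_swap])).reachable.trans hz

lemma SimpleGraph.IsAcyclic.notMem_side_swap (hA : G.IsAcyclic) (he : G.Adj u v)
    (hz : z ∈ side G u v) : z ∉ side G v u := fun hz' =>
  isBridge_iff.mp (isAcyclic_iff_forall_adj_isBridge.mp hA he)
    (hz.symm.trans (mem_side_swap_iff.mp hz'))

lemma SimpleGraph.IsAcyclic.not_adj_of_adj (hA : G.IsAcyclic) (he : G.Adj u v) (hzu : G.Adj z u) :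
    ¬ G.Adj z v := fun hzv =>
  isBridge_iff.mp (isAcyclic_iff_forall_adj_isBridge.mp hA he)
    ((deleteEdges_adj_of_ne hzu.symm (by simp [hzv.ne, he.ne])).reachable.trans
      (deleteEdges_adj_of_ne hzv (by simp [hzu.ne, hzv.ne])).reachable)

lemma mem_side_or_mem_side_swap (h : G.Reachable z u) : z ∈ side G u v ∨ z ∈ side G v u := by
  obtain ⟨W⟩ := h
  induction W with
  | nil => exact Or.inl (Reachable.refl _)
  | @cons a b u hab _ ih =>
    by_cases he : s(a, b) = s(u, v)
    · rcases Sym2.eq_iff.mp he with ⟨rfl, rfl⟩ | ⟨rfl, rfl⟩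
      exacts [Or.inl (Reachable.refl _), Or.inr (Reachable.refl _)]
    · have hab' := (deleteEdges_adj_of_ne hab he).reachable
      exact ih.imp hab'.trans fun h => mem_side_swap_iff.mpr (hab'.trans (mem_side_swap_iff.mp h))

lemma reachable_deleteEdges_of_mem_side (hw : w ∉ side G u v) (hx : x ∉ side G u v)
    (hz : z ∈ side G u v) : (G.deleteEdges {s(w, x)}).Reachable z u := by
  obtain ⟨W⟩ := hz
  suffices ∀ {p t : V} (W : (G.deleteEdges {s(u, v)}).Walk p t), t ∈ side G u v →
      (G.deleteEdges {s(w, x)}).Reachable p t from this W (Reachable.refl _)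
  intro p t W ht
  induction W with
  | nil => rfl
  | @cons a b _ hab W ih =>
    have ha : a ∈ side G u v := hab.reachable.trans (W.reachable.trans ht)
    have hne : s(a, b) ≠ s(w, x) := by
      intro h
      rcases Sym2.eq_iff.mp h with ⟨rfl, -⟩ | ⟨rfl, -⟩
      exacts [hw ha, hx ha]
    exact (deleteEdges_adj_of_ne (deleteEdges_adj.mp hab).1 hne).reachable.trans (ih ht)

lemma SimpleGraph.IsAcyclic.side_subset_side (hA : G.IsAcyclic) (he : G.Adj u v) (hf : G.Adj w x)
    (hne : s(w, x) ≠ s(u, v)) (hw : w ∈ side G v u) {α : V} (hαuv : α ∈ side G u v)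
    (hαwx : α ∈ side G w x) : side G u v ⊆ side G w x := by
  have hx : x ∈ side G v u := mem_side_of_adj_s12 hw hf (by rwa [Sym2.eq_swap (a := v)])
  have hreach : ∀ z ∈ side G u v, (G.deleteEdges {s(w, x)}).Reachable z u := fun _ =>
    reachable_deleteEdges_of_mem_side (fun h => hA.notMem_side_swap he h hw)
      (fun h => hA.notMem_side_swap he h hx)
  exact fun z hz => (hreach z hz).trans ((hreach α hαuv).symm.trans hαwx)

lemma SimpleGraph.IsAcyclic.side_subset_side_of_swap (hA : G.IsAcyclic)
    (hconn : ∀ p ∈ G.support, ∀ r ∈ G.support, G.Reachable p r)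
    (he : G.Adj u v) (hf : G.Adj w x) (h : side G v u ⊆ side G x w) :
    side G w x ⊆ side G u v := fun _ hz =>
  ((mem_side_or_mem_side_swap ((reachable_of_mem_side hz).trans
    (hconn w ⟨x, hf⟩ u ⟨v, he⟩))).resolve_right fun hz' => hA.notMem_side_swap hf hz (h hz'))

lemma SimpleGraph.IsAcyclic.side_subset_or_subset (hA : G.IsAcyclic)
    (hconn : ∀ p ∈ G.support, ∀ r ∈ G.support, G.Reachable p r)
    (he : G.Adj u v) (hf : G.Adj w x) (hne : s(w, x) ≠ s(u, v)) {α γ : V}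
    (hαuv : α ∈ side G u v) (hαwx : α ∈ side G w x)
    (hγvu : γ ∈ side G v u) (hγxw : γ ∈ side G x w) :
    side G w x ⊆ side G u v ∨ side G u v ⊆ side G w x := by
  have hne' : s(x, w) ≠ s(v, u) := by rwa [Sym2.eq_swap, Sym2.eq_swap (a := v)]
  rcases mem_side_or_mem_side_swap (v := v) (hconn w ⟨x, hf⟩ u ⟨v, he⟩) with hw | hw
  · have hx : x ∈ side G u v := mem_side_of_adj_s12 hw hf hne
    exact Or.inl (hA.side_subset_side_of_swap hconn he hf
      (hA.side_subset_side he.symm hf.symm hne' hx hγvu hγxw))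
  · exact Or.inr (hA.side_subset_side he hf hne hw hαuv hαwx)

lemma IsLeaf.mem_support (h : IsLeaf G z) : z ∈ G.support := by
  obtain ⟨y, hy⟩ := Set.ncard_eq_one.mp h
  exact ⟨y, show y ∈ G.neighborSet z by rw [hy]; rfl⟩

lemma IsLeaf.side_eq (h : IsLeaf G w) (hwx : G.Adj w x) : side G w x = {w} := by
  obtain ⟨y, hy⟩ := Set.ncard_eq_one.mp h
  have hN : ∀ {t}, G.Adj w t → t = x := fun {t} ht => by
    have ht : t ∈ G.neighborSet w := ht
    have hx : x ∈ G.neighborSet w := hwx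
    rw [hy] at ht hx
    exact ht.trans hx.symm
  refine Set.eq_singleton_iff_unique_mem.mpr ⟨Reachable.refl _, fun z hz => ?_⟩
  obtain ⟨W⟩ := (hz : (G.deleteEdges {s(w, x)}).Reachable z w).symm
  cases W with
  | nil => rfl
  | cons hadj _ =>
    obtain ⟨hadj, hne⟩ := deleteEdges_adj.mp hadj
    exact (hne (by rw [hN hadj]; rfl)).elim

lemma mem_side_of_mem_mside (hconn : ∀ p ∈ G.support, ∀ r ∈ G.support, G.Reachable p r)
    (he : G.Adj u v) {ℓ : L} (hℓ : ℓ ∈ Mside G ψ u v) (hz : IsLeaf G z) (hψ : ψ z = ℓ) :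
    z ∈ side G u v :=
  (mem_side_or_mem_side_swap (hconn z hz.mem_support u ⟨v, he⟩)).resolve_right
    fun h => hℓ.2 ⟨z, hz, h, hψ⟩

lemma SimpleGraph.IsAcyclic.mem_mside_of_side_subset (hA : G.IsAcyclic)
    (hconn : ∀ p ∈ G.support, ∀ r ∈ G.support, G.Reachable p r)
    (he : G.Adj u v) (hf : G.Adj w x) (hsub : side G u v ⊆ side G w x) {ℓ : L}
    (hℓ : ℓ ∈ Mside G ψ u v) : ℓ ∈ Mside G ψ w x := by
  obtain ⟨z, hz, hzs, hψ⟩ := hℓ.1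
  refine ⟨⟨z, hz, hsub hzs, hψ⟩, fun ⟨y, hy, hys, hyψ⟩ => ?_⟩
  exact hA.notMem_side_swap hf (hsub (mem_side_of_mem_mside hconn he hℓ hy hyψ)) hys

end Sides

section Quartets

variable {G : SimpleGraph V} {ψ : V → L} {u v w x : V} {a b c d : L}

structure Separates (G : SimpleGraph V) (ψ : V → L) (u v : V) (a b c d : L) : Prop where
  adj : G.Adj u v
  ne_left : a ≠ b
  ne_right : c ≠ d
  mem_left₁ : a ∈ Mside G ψ u v
  mem_left₂ : b ∈ Mside G ψ u v
  mem_right₁ : c ∈ Mside G ψ v u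
  mem_right₂ : d ∈ Mside G ψ v u

def ResolvedOnlyBy (G : SimpleGraph V) (ψ : V → L) (q : Quartet L) (u v : V) : Prop :=
  ∀ w x, Resolves G ψ w x q → s(w, x) = s(u, v)

lemma Separates.resolves (h : Separates G ψ u v a b c d) :
    Resolves G ψ u v s(s(a, b), s(c, d)) :=
  ⟨h.adj, a, b, c, d, h.ne_left, h.ne_right, h.mem_left₁, h.mem_left₂, h.mem_right₁,
    h.mem_right₂, rfl⟩

lemma Separates.symm (h : Separates G ψ u v a b c d) : Separates G ψ v u c d a b :=
  ⟨h.adj.symm, h.ne_right, h.ne_left, h.mem_right₁, h.mem_right₂, h.mem_left₁, h.mem_left₂⟩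

lemma Separates.mono {G' : SimpleGraph V'} {ψ' : V' → L} {u' v' : V'}
    (h : Separates G ψ u v a b c d) (hadj : G'.Adj u' v')
    (hu : Mside G ψ u v ⊆ Mside G' ψ' u' v') (hv : Mside G ψ v u ⊆ Mside G' ψ' v' u') :
    Separates G' ψ' u' v' a b c d :=
  ⟨hadj, h.ne_left, h.ne_right, hu h.mem_left₁, hu h.mem_left₂, hv h.mem_right₁,
    hv h.mem_right₂⟩

lemma ResolvedOnlyBy.symm (h : ResolvedOnlyBy G ψ s(s(a, b), s(c, d)) u v) :
    ResolvedOnlyBy G ψ s(s(c, d), s(a, b)) v u := fun w x hwx => by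
  rw [Sym2.eq_swap (a := s(c, d))] at hwx
  rw [h w x hwx, Sym2.eq_swap]

lemma Resolves.symm {q : Quartet L} (h : Resolves G ψ u v q) : Resolves G ψ v u q := by
  obtain ⟨hadj, a, b, c, d, hab, hcd, ha, hb, hc, hd, rfl⟩ := h
  have h := (Separates.symm ⟨hadj, hab, hcd, ha, hb, hc, hd⟩).resolves
  rwa [Sym2.eq_swap] at h

lemma Separates.of_eq {a' b' c' d' : L} (h : Separates G ψ u v a' b' c' d')
    (hab : s(a, b) = s(a', b')) (hcd : s(c, d) = s(c', d')) : Separates G ψ u v a b c d := by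
  have hl : ∀ y ∈ s(a', b'), y ∈ Mside G ψ u v := by simp [h.mem_left₁, h.mem_left₂]
  have hr : ∀ y ∈ s(c', d'), y ∈ Mside G ψ v u := by simp [h.mem_right₁, h.mem_right₂]
  refine ⟨h.adj, fun h' => h.ne_left ?_, fun h' => h.ne_right ?_, hl a ?_, hl b ?_, hr c ?_,
    hr d ?_⟩
  · rw [← Sym2.mk_isDiag_iff, ← hab, Sym2.mk_isDiag_iff, h']
  · rw [← Sym2.mk_isDiag_iff, ← hcd, Sym2.mk_isDiag_iff, h']
  all_goals simp [← hab, ← hcd]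

lemma Resolves.exists_separates (h : Resolves G ψ w x s(s(a, b), s(c, d))) :
    ∃ w' x', s(w', x') = s(w, x) ∧ Separates G ψ w' x' a b c d := by
  obtain ⟨hadj, a', b', c', d', hab, hcd, ha, hb, hc, hd, hq⟩ := h
  have hsep : Separates G ψ w x a' b' c' d' := ⟨hadj, hab, hcd, ha, hb, hc, hd⟩
  rcases Sym2.eq_iff.mp hq with ⟨h₁, h₂⟩ | ⟨h₁, h₂⟩
  · exact ⟨w, x, rfl, hsep.of_eq h₁ h₂⟩
  · exact ⟨x, w, Sym2.eq_swap, hsep.symm.of_eq h₁ h₂⟩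

lemma Resolves.internalEdge {q : Quartet L} (h : Resolves G ψ u v q) : InternalEdge G u v := by
  obtain ⟨hadj, a, b, c, d, hab, hcd, ha, hb, hc, hd, -⟩ := h
  have hleaf : ∀ {u v a b}, G.Adj u v → a ≠ b → a ∈ Mside G ψ u v → b ∈ Mside G ψ u v →
      ¬ IsLeaf G u := fun hadj hab ha hb hleaf => by
    obtain ⟨α, -, hα, rfl⟩ := ha.1
    obtain ⟨β, -, hβ, rfl⟩ := hb.1
    rw [hleaf.side_eq hadj] at hα hβ
    exact hab (by rw [hα, hβ])
  exact ⟨hadj, hleaf hadj hab ha hb, hleaf hadj.symm hcd hc hd⟩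

end Quartets

section Reconstruction

variable {G : SimpleGraph V} {ψ : V → L} {u v : V} {a b c d : L}

def reconstructedSide (I : Set (Quartet L)) (a b c d : L) : Set L :=
  {a, b} ∪ {ℓ | ℓ ≠ a ∧ s(s(a, ℓ), s(c, d)) ∈ I}

lemma mside_subset_reconstructedSide (he : G.Adj u v) (hcd : c ≠ d)
    (ha : a ∈ Mside G ψ u v) (hc : c ∈ Mside G ψ v u) (hd : d ∈ Mside G ψ v u) :
    Mside G ψ u v ⊆ reconstructedSide (infoContent G ψ) a b c d := by
  intro ℓ hℓ
  by_cases hℓa : ℓ = a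
  · exact Or.inl (Or.inl hℓa)
  · exact Or.inr ⟨hℓa, u, v, he, a, ℓ, c, d, Ne.symm hℓa, hcd, ha, hℓ, hc, hd, rfl⟩

/-- An edge `(w,x)` resolving `aℓ|cd` separates the leaves labelled `a` and `c`, as `(u,v)` does;
so the two edges are nested, and the nesting that would let `(w,x)` resolve `ab|cd` is excluded
by uniqueness. -/
lemma SimpleGraph.IsAcyclic.reconstructedSide_subset_mside (hA : G.IsAcyclic)
    (hconn : ∀ p ∈ G.support, ∀ r ∈ G.support, G.Reachable p r)
    (hsep : Separates G ψ u v a b c d) (huniq : ResolvedOnlyBy G ψ s(s(a, b), s(c, d)) u v) :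
    reconstructedSide (infoContent G ψ) a b c d ⊆ Mside G ψ u v := by
  rintro ℓ ((rfl | rfl) | ⟨hℓa, p, r, hres⟩)
  · exact hsep.mem_left₁
  · exact hsep.mem_left₂
  obtain ⟨w, x, -, hwx⟩ := hres.exists_separates
  by_cases hef : s(w, x) = s(u, v)
  · rcases Sym2.eq_iff.mp hef with ⟨rfl, rfl⟩ | ⟨rfl, rfl⟩
    · exact hwx.mem_left₂
    · exact absurd hsep.mem_left₁.1 hwx.mem_left₁.2
  obtain ⟨α, hα, hαuv, hαψ⟩ := hsep.mem_left₁.1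
  obtain ⟨γ, hγ, hγvu, hγψ⟩ := hsep.mem_right₁.1
  rcases hA.side_subset_or_subset hconn hsep.adj hwx.adj hef hαuv
      (mem_side_of_mem_mside hconn hwx.adj hwx.mem_left₁ hα hαψ) hγvu
      (mem_side_of_mem_mside hconn hwx.adj.symm hwx.mem_right₁ hγ hγψ) with hsub | hsub
  · exact hA.mem_mside_of_side_subset hconn hwx.adj hsep.adj hsub hwx.mem_left₂
  · refine absurd (huniq w x (Separates.resolves ⟨hwx.adj, hsep.ne_left, hsep.ne_right,
      hwx.mem_left₁, ?_, hwx.mem_right₁, hwx.mem_right₂⟩)) hef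
    exact hA.mem_mside_of_side_subset hconn hsep.adj hwx.adj hsub hsep.mem_left₂

lemma SimpleGraph.IsAcyclic.mside_eq_reconstructedSide (hA : G.IsAcyclic)
    (hconn : ∀ p ∈ G.support, ∀ r ∈ G.support, G.Reachable p r)
    (hsep : Separates G ψ u v a b c d) (huniq : ResolvedOnlyBy G ψ s(s(a, b), s(c, d)) u v) :
    Mside G ψ u v = reconstructedSide (infoContent G ψ) a b c d :=
  (mside_subset_reconstructedSide hsep.adj hsep.ne_right hsep.mem_left₁ hsep.mem_right₁
    hsep.mem_right₂).antisymm (hA.reconstructedSide_subset_mside hconn hsep huniq)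

lemma SimpleGraph.IsAcyclic.msides_subset_of_separates {G' : SimpleGraph V'} {ψ' : V' → L}
    {u' v' : V'} (hA : G.IsAcyclic)
    (hconn : ∀ p ∈ G.support, ∀ r ∈ G.support, G.Reachable p r)
    (hinfo : infoContent G' ψ' = infoContent G ψ)
    (hsep : Separates G ψ u v a b c d) (huniq : ResolvedOnlyBy G ψ s(s(a, b), s(c, d)) u v)
    (hsep' : Separates G' ψ' u' v' a b c d) :
    Mside G' ψ' u' v' ⊆ Mside G ψ u v ∧ Mside G' ψ' v' u' ⊆ Mside G ψ v u := by
  have key : ∀ {u v : V} {u' v' : V'} {a b c d : L}, Separates G ψ u v a b c d →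
      ResolvedOnlyBy G ψ s(s(a, b), s(c, d)) u v → Separates G' ψ' u' v' a b c d →
      Mside G' ψ' u' v' ⊆ Mside G ψ u v := fun hsep huniq hsep' => by
    rw [hA.mside_eq_reconstructedSide hconn hsep huniq, ← hinfo]
    exact mside_subset_reconstructedSide hsep'.adj hsep.ne_right hsep'.mem_left₁
      hsep'.mem_right₁ hsep'.mem_right₂
  exact ⟨key hsep huniq hsep', key hsep.symm huniq.symm hsep'.symm⟩

end Reconstruction

section Contraction

variable {G : SimpleGraph V} {u v w x z : V}

open scoped Classical in
noncomputable def collapse (u v z : V) : V := if z = v then u else z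

@[simp] lemma collapse_self : collapse u v v = u := if_pos rfl

lemma collapse_of_ne (h : z ≠ v) : collapse u v z = z := if_neg h

lemma contractEdge_adj_collapse {a b : V} (he : G.Adj u v) (hab : G.Adj a b)
    (hne : s(a, b) ≠ s(u, v)) : (contractEdge G u v).Adj (collapse u v a) (collapse u v b) := by
  by_cases ha : a = v <;> by_cases hb : b = v
  · exact (hab.ne (ha.trans hb.symm)).elim
  · rw [ha] at hab hne ⊢
    rw [collapse_self, collapse_of_ne hb]
    exact ⟨by rintro rfl; exact hne Sym2.eq_swap, he.ne, hb, Or.inr (Or.inl ⟨rfl, hab⟩)⟩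
  · rw [hb] at hab hne ⊢
    rw [collapse_self, collapse_of_ne ha]
    exact ⟨by rintro rfl; exact hne rfl, ha, he.ne, Or.inr (Or.inr ⟨rfl, hab⟩)⟩
  · rw [collapse_of_ne ha, collapse_of_ne hb]
    exact ⟨hab.ne, ha, hb, Or.inl hab⟩

lemma exists_adj_of_contractEdge_adj {p r : V} (he : G.Adj u v)
    (h : (contractEdge G u v).Adj p r) :
    ∃ w x, G.Adj w x ∧ s(w, x) ≠ s(u, v) ∧ collapse u v w = p ∧ collapse u v x = r := by
  obtain ⟨hpr, hpv, hrv, hGpr | ⟨rfl, hvr⟩ | ⟨rfl, hpv'⟩⟩ := h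
  · exact ⟨p, r, hGpr, by simp [hpv, hrv], collapse_of_ne hpv, collapse_of_ne hrv⟩
  · exact ⟨v, r, hvr, by simp [hrv, Ne.symm hpr], collapse_self, collapse_of_ne hrv⟩
  · exact ⟨p, v, hpv', by simp [hpv, hpr], collapse_of_ne hpv, collapse_self⟩

lemma reachable_contractEdge_collapse {a b : V} (he : G.Adj u v) (h : G.Reachable a b) :
    (contractEdge G u v).Reachable (collapse u v a) (collapse u v b) := by
  obtain ⟨W⟩ := h
  induction W with
  | nil => rfl
  | @cons a b _ hab _ ih =>
    by_cases hne : s(a, b) = s(u, v)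
    · have : collapse u v a = collapse u v b := by
        rcases Sym2.eq_iff.mp hne with ⟨rfl, rfl⟩ | ⟨rfl, rfl⟩ <;>
          simp [collapse_of_ne he.ne]
      exact this ▸ ih
    · exact (contractEdge_adj_collapse he hab hne).reachable.trans ih

lemma reachable_deleteEdges_collapse (he : G.Adj u v) (hf : s(w, x) ≠ s(u, v)) (z : V) :
    (G.deleteEdges {s(w, x)}).Reachable (collapse u v z) z := by
  by_cases hz : z = v
  · rw [hz, collapse_self]
    exact (deleteEdges_adj_of_ne he (Ne.symm hf)).reachable
  · rw [collapse_of_ne hz]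

lemma reachable_deleteEdges_of_contractEdge {p q : V} (he : G.Adj u v) (hf : s(w, x) ≠ s(u, v))
    (h : ((contractEdge G u v).deleteEdges {s(collapse u v w, collapse u v x)}).Reachable p q) :
    (G.deleteEdges {s(w, x)}).Reachable p q := by
  obtain ⟨W⟩ := h
  induction W with
  | nil => rfl
  | @cons a b _ hab _ ih =>
    obtain ⟨hab, hne⟩ := deleteEdges_adj.mp hab
    obtain ⟨a', b', hGab, -, rfl, rfl⟩ := exists_adj_of_contractEdge_adj he hab
    have hne' : s(a', b') ≠ s(w, x) := fun h =>
      hne (by rw [Set.mem_singleton_iff, ← Sym2.map_mk, h, Sym2.map_mk])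
    exact (reachable_deleteEdges_collapse he hf a').trans
      ((deleteEdges_adj_of_ne hGab hne').reachable.trans
        ((reachable_deleteEdges_collapse he hf b').symm.trans ih))

lemma SimpleGraph.IsAcyclic.mem_side_contractEdge_iff (hA : G.IsAcyclic) (he : G.Adj u v)
    (hwx : G.Adj w x) (hf : s(w, x) ≠ s(u, v)) (hz : z ≠ v) :
    z ∈ side (contractEdge G u v) (collapse u v w) (collapse u v x) ↔ z ∈ side G w x := by
  have hf' : s(x, w) ≠ s(u, v) := by rwa [Sym2.eq_swap]
  refine ⟨fun h => (reachable_deleteEdges_of_contractEdge he hf h).trans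
    (reachable_deleteEdges_collapse he hf w), fun h => by_contra fun hn => ?_⟩
  have hr := reachable_contractEdge_collapse he (reachable_of_mem_side h)
  rw [collapse_of_ne hz] at hr
  have h' := (mem_side_or_mem_side_swap hr).resolve_left hn
  exact hA.notMem_side_swap hwx h ((reachable_deleteEdges_of_contractEdge he hf' h').trans
    (reachable_deleteEdges_collapse he hf' x))

lemma IsLeaf.ne_of_three_le_deg (hz : IsLeaf G z) (hv : 3 ≤ deg G v) : z ≠ v := by
  rintro rfl
  rw [IsLeaf] at hz
  omega

end Contraction

section ContractionContent

variable [Finite V] {G : SimpleGraph V} {ψ : V → L} {u v w x z : V}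

lemma deg_contractEdge_right : deg (contractEdge G u v) v = 0 := by
  rw [deg, Set.ncard_eq_zero]
  exact Set.eq_empty_of_forall_notMem fun y h => h.2.1 rfl

lemma deg_sub_one_le_deg_contractEdge_left (he : G.Adj u v) :
    deg G v - 1 ≤ deg (contractEdge G u v) u := by
  rw [deg, deg, ← Set.ncard_sdiff_singleton_of_mem (show u ∈ G.neighborSet v from he.symm)]
  refine Set.ncard_le_ncard (fun y ⟨hvy, hyu⟩ => ?_)
  exact ⟨Ne.symm hyu, he.ne, (hvy : G.Adj v y).ne', Or.inr (Or.inl ⟨rfl, hvy⟩)⟩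

lemma SimpleGraph.IsAcyclic.deg_contractEdge_of_ne (hA : G.IsAcyclic) (he : G.Adj u v)
    (hzu : z ≠ u) (hzv : z ≠ v) : deg (contractEdge G u v) z = deg G z := by
  by_cases hadj : G.Adj z v
  · have hN : (contractEdge G u v).neighborSet z = insert u (G.neighborSet z \ {v}) := by
      ext y
      simp only [mem_neighborSet, Set.mem_insert_iff, Set.mem_sdiff, Set.mem_singleton_iff]
      constructor
      · rintro ⟨-, -, hyv, hzy | ⟨rfl, -⟩ | ⟨rfl, -⟩⟩
        exacts [Or.inr ⟨hzy, hyv⟩, absurd rfl hzu, Or.inl rfl]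
      · rintro (rfl | ⟨hzy, hyv⟩)
        exacts [⟨hzu, hzv, he.ne, Or.inr (Or.inr ⟨rfl, hadj⟩)⟩, ⟨hzy.ne, hzv, hyv, Or.inl hzy⟩]
    have hu : u ∉ G.neighborSet z \ {v} := fun h => hA.not_adj_of_adj he.symm hadj h.1
    rw [deg, deg, hN, Set.ncard_insert_of_notMem hu,
      Set.ncard_sdiff_singleton_add_one (show v ∈ G.neighborSet z from hadj)]
  · have hN : (contractEdge G u v).neighborSet z = G.neighborSet z := by
      ext y
      refine ⟨?_, fun hzy => ⟨hzy.ne, hzv, fun hyv => hadj (hyv ▸ hzy), Or.inl hzy⟩⟩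
      rintro ⟨-, -, -, hzy | ⟨rfl, -⟩ | ⟨-, hzv'⟩⟩
      exacts [hzy, absurd rfl hzu, absurd hzv' hadj]
    rw [deg, deg, hN]

lemma SimpleGraph.IsAcyclic.isLeaf_contractEdge_iff (hA : G.IsAcyclic) (he : G.Adj u v)
    (hu : 3 ≤ deg G u) (hv : 3 ≤ deg G v) : IsLeaf (contractEdge G u v) z ↔ IsLeaf G z := by
  by_cases hzu : z = u
  · have := deg_sub_one_le_deg_contractEdge_left (G := G) he
    rw [IsLeaf, IsLeaf, hzu]
    omega
  by_cases hzv : z = v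
  · rw [IsLeaf, IsLeaf, hzv, deg_contractEdge_right]
    omega
  rw [IsLeaf, IsLeaf, hA.deg_contractEdge_of_ne he hzu hzv]

lemma SimpleGraph.IsAcyclic.mside_contractEdge (hA : G.IsAcyclic) (he : G.Adj u v)
    (hu : 3 ≤ deg G u) (hv : 3 ≤ deg G v) (hwx : G.Adj w x) (hf : s(w, x) ≠ s(u, v)) :
    Mside (contractEdge G u v) ψ (collapse u v w) (collapse u v x) = Mside G ψ w x := by
  have hsideLabels : ∀ {w x}, G.Adj w x → s(w, x) ≠ s(u, v) →
      sideLabels (contractEdge G u v) ψ (collapse u v w) (collapse u v x) = sideLabels G ψ w x :=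
    fun hwx hf => by
      ext m
      simp only [sideLabels, Set.mem_ofPred_eq, hA.isLeaf_contractEdge_iff he hu hv]
      exact exists_congr fun z => and_congr_right fun hz =>
        and_congr_left' (hA.mem_side_contractEdge_iff he hwx hf (hz.ne_of_three_le_deg hv))
  rw [Mside, Mside, hsideLabels hwx hf, hsideLabels hwx.symm (by rwa [Sym2.eq_swap])]

lemma SimpleGraph.IsAcyclic.infoContent_contractEdge (hA : G.IsAcyclic) (he : G.Adj u v)
    (hu : 3 ≤ deg G u) (hv : 3 ≤ deg G v) :
    infoContent (contractEdge G u v) ψ = {q | ∃ w x, Resolves G ψ w x q ∧ s(w, x) ≠ s(u, v)} := by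
  have hres : ∀ {w x q}, G.Adj w x → s(w, x) ≠ s(u, v) →
      (Resolves (contractEdge G u v) ψ (collapse u v w) (collapse u v x) q ↔
        Resolves G ψ w x q) := fun hwx hf => by
    rw [Resolves, Resolves, hA.mside_contractEdge he hu hv hwx hf,
      hA.mside_contractEdge he hu hv hwx.symm (by rwa [Sym2.eq_swap])]
    exact and_congr_left' (iff_of_true (contractEdge_adj_collapse he hwx hf) hwx)
  ext q
  constructor
  · rintro ⟨p, r, h⟩
    obtain ⟨w, x, hwx, hf, rfl, rfl⟩ := exists_adj_of_contractEdge_adj he h.1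
    exact ⟨w, x, (hres hwx hf).mp h, hf⟩
  · rintro ⟨w, x, h, hf⟩
    exact ⟨_, _, (hres h.1 hf).mpr h⟩

lemma SimpleGraph.IsAcyclic.exists_separates_resolvedOnlyBy (hA : G.IsAcyclic) (he : G.Adj u v)
    (hu : 3 ≤ deg G u) (hv : 3 ≤ deg G v) (hc : ¬ Contractible G ψ u v) :
    ∃ a b c d, Separates G ψ u v a b c d ∧ ResolvedOnlyBy G ψ s(s(a, b), s(c, d)) u v := by
  by_contra! hall
  refine hc ⟨⟨he, by rw [IsLeaf]; omega, by rw [IsLeaf]; omega⟩, ?_⟩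
  rw [hA.infoContent_contractEdge he hu hv]
  ext q
  refine ⟨fun ⟨w, x, h, _⟩ => ⟨w, x, h⟩, fun ⟨w, x, h⟩ => ?_⟩
  by_cases hwx : s(w, x) = s(u, v)
  · have huv : Resolves G ψ u v q := by
      rcases Sym2.eq_iff.mp hwx with ⟨rfl, rfl⟩ | ⟨rfl, rfl⟩
      exacts [h, h.symm]
    obtain ⟨-, a, b, c, d, hab, hcd, ha, hb, hc, hd, rfl⟩ := huv
    simpa [ResolvedOnlyBy] using hall a b c d ⟨he, hab, hcd, ha, hb, hc, hd⟩
  · exact ⟨w, x, h, hwx⟩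

end ContractionContent

lemma Set.InjOn.exists_equiv_of_image_eq {α β γ : Type*} {f : α → γ} {g : β → γ} {s : Set α}
    {t : Set β} (hf : s.InjOn f) (hg : t.InjOn g) (h : f '' s = g '' t) :
    ∃ e : s ≃ t, ∀ x, g (e x) = f x :=
  ⟨(Equiv.Set.imageOfInjOn f s hf).trans
      ((Equiv.setCongr h).trans (Equiv.Set.imageOfInjOn g t hg).symm),
    fun _ => congrArg Subtype.val ((Equiv.Set.imageOfInjOn g t hg).apply_symm_apply _)⟩

lemma InternalEdge.symm {G : SimpleGraph V} {u v : V} (h : InternalEdge G u v) :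
    InternalEdge G v u :=
  ⟨h.1.symm, h.2.2, h.2.1⟩

lemma delta_eq_of_mside_eq {G : SimpleGraph V} {ψ : V → L} {G' : SimpleGraph V'}
    {ψ' : V' → L} {u v : V} {u' v' : V'} (hadj : G.Adj u v) (hadj' : G'.Adj u' v')
    (hu : Mside G ψ u v = Mside G' ψ' u' v') (hv : Mside G ψ v u = Mside G' ψ' v' u') :
    Δ G ψ u v = Δ G' ψ' u' v' := by
  ext q
  simp only [Δ, Set.mem_ofPred_eq, Resolves, hu, hv]
  exact and_congr_left' (iff_of_true hadj hadj')

def edgeSplit (G : SimpleGraph V) (ψ : V → L) : Sym2 V → Sym2 (Set L) :=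
  Sym2.lift ⟨fun u v => s(Mside G ψ u v, Mside G ψ v u), fun _ _ => Sym2.eq_swap⟩

lemma edgeSplit_mk (G : SimpleGraph V) (ψ : V → L) (u v : V) :
    edgeSplit G ψ s(u, v) = s(Mside G ψ u v, Mside G ψ v u) :=
  rfl

namespace MulTree

variable {u v : V}

lemma exists_separates_resolvedOnlyBy (T : MulTree V L) (hT : ∀ a b, ¬ Contractible T.G T.ψ a b)
    (h : InternalEdge T.G u v) :
    ∃ a b c d, Separates T.G T.ψ u v a b c d ∧ ResolvedOnlyBy T.G T.ψ s(s(a, b), s(c, d)) u v :=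
  haveI := T.fin
  T.acyclic.exists_separates_resolvedOnlyBy h.1 (T.internal3 u ⟨v, h.1⟩ h.2.1)
    (T.internal3 v ⟨u, h.1.symm⟩ h.2.2) (hT u v)

lemma edgeSplit_injOn (T : MulTree V L) (hT : ∀ a b, ¬ Contractible T.G T.ψ a b) :
    (internalEdgeSet T.G).InjOn (edgeSplit T.G T.ψ) := by
  rintro _ ⟨p, r, rfl, h⟩ _ ⟨p', r', rfl, h'⟩ heq
  obtain ⟨a, b, c, d, hsep, huniq⟩ := T.exists_separates_resolvedOnlyBy hT h
  rw [edgeSplit_mk, edgeSplit_mk, Sym2.eq_iff] at heq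
  rcases heq with ⟨hu, hv⟩ | ⟨hu, hv⟩
  · exact (huniq p' r' (hsep.mono h'.1 hu.le hv.le).resolves).symm
  · exact (huniq r' p' (hsep.mono h'.1.symm hu.le hv.le).resolves).symm.trans Sym2.eq_swap

lemma exists_mside_eq_of_infoContent_eq (T : MulTree V L) (T' : MulTree V' L)
    (hT : ∀ a b, ¬ Contractible T.G T.ψ a b) (hT' : ∀ a b, ¬ Contractible T'.G T'.ψ a b)
    (hinfo : infoContent T.G T.ψ = infoContent T'.G T'.ψ) (h : InternalEdge T.G u v) :
    ∃ u' v', InternalEdge T'.G u' v' ∧ Mside T.G T.ψ u v = Mside T'.G T'.ψ u' v' ∧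
      Mside T.G T.ψ v u = Mside T'.G T'.ψ v' u' := by
  obtain ⟨a, b, c, d, hsep, huniq⟩ := T.exists_separates_resolvedOnlyBy hT h
  obtain ⟨p, r, hres⟩ : s(s(a, b), s(c, d)) ∈ infoContent T'.G T'.ψ :=
    hinfo ▸ ⟨u, v, hsep.resolves⟩
  obtain ⟨u', v', -, hsep'⟩ := hres.exists_separates
  have h' : InternalEdge T'.G u' v' := hsep'.resolves.internalEdge
  obtain ⟨a', b', c', d', hsep'', huniq'⟩ := T'.exists_separates_resolvedOnlyBy hT' h'
  have hle := T.acyclic.msides_subset_of_separates T.conn hinfo.symm hsep huniq hsep'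
  have hge := T'.acyclic.msides_subset_of_separates T'.conn hinfo hsep'' huniq'
    (hsep''.mono h.1 hle.1 hle.2)
  exact ⟨u', v', h', hge.1.antisymm hle.1, hge.2.antisymm hle.2⟩

lemma image_edgeSplit_subset (T : MulTree V L) (T' : MulTree V' L)
    (hT : ∀ a b, ¬ Contractible T.G T.ψ a b) (hT' : ∀ a b, ¬ Contractible T'.G T'.ψ a b)
    (hinfo : infoContent T.G T.ψ = infoContent T'.G T'.ψ) :
    edgeSplit T.G T.ψ '' internalEdgeSet T.G ⊆ edgeSplit T'.G T'.ψ '' internalEdgeSet T'.G := by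
  rintro _ ⟨_, ⟨u, v, rfl, h⟩, rfl⟩
  obtain ⟨u', v', h', hu, hv⟩ := exists_mside_eq_of_infoContent_eq T T' hT hT' hinfo h
  exact ⟨s(u', v'), ⟨u', v', rfl, h'⟩, by rw [edgeSplit_mk, edgeSplit_mk, hu, hv]⟩

end MulTree

/-- For maximally reduced MUL-trees `T, T'` with `I(T) = I(T')`,
there is a bijection `φ` between the internal edges of `T` and of `T'` such that
corresponding edges, suitably oriented, have equal `M`-sets on corresponding
sides; in particular `Δ(u,v) = Δ(φ(u,v))`. -/
theorem stmt12 (T : MulTree V L) (T' : MulTree V' L)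
    (hT : MaximallyReduced T.G T.ψ) (hT' : MaximallyReduced T'.G T'.ψ)
    (hinfo : infoContent T.G T.ψ = infoContent T'.G T'.ψ) :
    ∃ φ : internalEdgeSet T.G ≃ internalEdgeSet T'.G,
      ∀ (u v : V) (h : InternalEdge T.G u v),
        ∃ u' v' : V', InternalEdge T'.G u' v' ∧
          (φ ⟨s(u, v), ⟨u, v, rfl, h⟩⟩).1 = s(u', v') ∧
          Mside T.G T.ψ u v = Mside T'.G T'.ψ u' v' ∧
          Mside T.G T.ψ v u = Mside T'.G T'.ψ v' u' ∧
          Δ T.G T.ψ u v = Δ T'.G T'.ψ u' v' := by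
  obtain ⟨φ, hφ⟩ := (T.edgeSplit_injOn hT.2).exists_equiv_of_image_eq (T'.edgeSplit_injOn hT'.2)
    ((MulTree.image_edgeSplit_subset T T' hT.2 hT'.2 hinfo).antisymm
      (MulTree.image_edgeSplit_subset T' T hT'.2 hT.2 hinfo.symm))
  refine ⟨φ, fun u v h => ?_⟩
  obtain ⟨a, b, hab, h'⟩ := (φ ⟨s(u, v), u, v, rfl, h⟩).2
  have hsplit := hφ ⟨s(u, v), u, v, rfl, h⟩
  rw [hab, edgeSplit_mk, edgeSplit_mk, Sym2.eq_iff] at hsplit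
  rcases hsplit with ⟨hu, hv⟩ | ⟨hu, hv⟩
  · exact ⟨a, b, h', hab, hu.symm, hv.symm, delta_eq_of_mside_eq h.1 h'.1 hu.symm hv.symm⟩
  · exact ⟨b, a, h'.symm, hab.trans Sym2.eq_swap, hv.symm, hu.symm,
      delta_eq_of_mside_eq h.1 h'.1.symm hv.symm hu.symm⟩
end

section
/- If two distinct leaves of a MUL-tree T carry the same label and are attached to the same pendant node (i.e., they have a common neighbor), then deleting one of them (suppressing the resulting degree-2 node if one arises) yields a tree with the same information content as T; in particular, each such leaf is prunable. -/
/-!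
Every edge `xy` of `T` other than the pendant edges at `u` has `v₁` and `v₂` on the same side,
so on whichever side `v₁` lies its label is still carried by `v₂` once `v₁` is gone: the label
sets `M_x^{xy}` do not change. The edges that disappear (the pendant edges at `u`, and the edge
from `u` to its third neighbour `t` when `u` is suppressed) or appear (`v₂t`) all have a side
carrying a single label, so they resolve no quartet. Sides are compared by a retraction of the
vertex set collapsing `v₁` (and a suppressed `u`) onto a neighbour: it sends each edge of one
graph to a path of the other, and fixes every vertex that survives.
-/

open SimpleGraph

variable {V V' L L' : Type}

namespace SimpleGraph

theorem Reachable.apply_of_adj {G H : SimpleGraph V} (f : V → V)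
    (hf : ∀ a b, G.Adj a b → H.Reachable (f a) (f b)) {w z : V} (h : G.Reachable w z) :
    H.Reachable (f w) (f z) := by
  rw [reachable_iff_reflTransGen] at h ⊢
  exact Relation.ReflTransGen.lift' f (fun a b hab => (reachable_iff_reflTransGen _ _).mp
    (hf a b hab)) _ _ h

theorem Reachable.mem_of_adj_closed {G : SimpleGraph V} {S : Set V}
    (hS : ∀ a b, G.Adj a b → a ∈ S → b ∈ S) {a b : V} (h : G.Reachable a b) (ha : a ∈ S) :
    b ∈ S := by
  rw [reachable_iff_reflTransGen] at h
  induction h with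
  | refl => exact ha
  | tail _ hbc ih => exact hS _ _ hbc ih

theorem reachable_iff_of_retraction {H H' : SimpleGraph V} (f : V → V)
    (hf : ∀ a b, H.Adj a b → H'.Reachable (f a) (f b))
    (hH' : ∀ a b, H'.Adj a b → H.Reachable a b) {w z : V} (hw : f w = w) (hz : f z = z) :
    H'.Reachable w z ↔ H.Reachable w z :=
  ⟨fun h => h.apply_of_adj id hH', fun h => hw ▸ hz ▸ h.apply_of_adj f hf⟩

end SimpleGraph

section
variable {G G' : SimpleGraph V} {ψ : V → L}

theorem sideLabels_subsingleton {x y : V} (ℓ : L) (S : Set V)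
    (hS : ∀ a b, (G.deleteEdges {s(x, y)}).Adj a b → a ∈ S → b ∈ S) (hx : x ∈ S)
    (hℓ : ∀ w ∈ S, IsLeaf G w → ψ w = ℓ) : (sideLabels G ψ x y).Subsingleton :=
  Set.subsingleton_of_subset_singleton fun _ ⟨w, hw, hside, hwm⟩ =>
    hwm ▸ hℓ w (hside.symm.mem_of_adj_closed hS hx) hw

theorem sideLabels_subsingleton_of_neighborSet_subset {v z : V} (hN : G.neighborSet v ⊆ {z}) :
    (sideLabels G ψ v z).Subsingleton := by
  refine sideLabels_subsingleton (ψ v) {v} ?_ rfl (fun w hw _ => by rw [hw])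
  rintro a b hab rfl
  rw [deleteEdges_adj, Set.mem_singleton_iff, hN hab.1] at hab
  exact absurd rfl hab.2

theorem Resolves.nontrivial_sideLabels {x y : V} {q : Quartet L} (h : Resolves G ψ x y q) :
    (sideLabels G ψ x y).Nontrivial ∧ (sideLabels G ψ y x).Nontrivial := by
  obtain ⟨-, a, b, c, d, hab, hcd, ha, hb, hc, hd, -⟩ := h
  exact ⟨⟨a, ha.1, b, hb.1, hab⟩, ⟨c, hc.1, d, hd.1, hcd⟩⟩

theorem infoContent_subset_of_forall_adj
    (h : ∀ x y, G.Adj x y → (sideLabels G ψ x y).Nontrivial → (sideLabels G ψ y x).Nontrivial →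
      G'.Adj x y ∧ sideLabels G' ψ x y = sideLabels G ψ x y) :
    infoContent G ψ ⊆ infoContent G' ψ := by
  rintro q ⟨x, y, hres⟩
  obtain ⟨hxy, hyx⟩ := hres.nontrivial_sideLabels
  obtain ⟨hadj, exy⟩ := h x y hres.1 hxy hyx
  obtain ⟨-, eyx⟩ := h y x hres.1.symm hyx hxy
  refine ⟨x, y, hadj, ?_⟩
  unfold Mside
  rw [exy, eyx]
  exact hres.2

theorem sideLabels_eq_of_twin {x y v₁ v₂ : V}
    (hleaf : ∀ w, IsLeaf G' w ↔ IsLeaf G w ∧ w ≠ v₁)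
    (hside : ∀ w, IsLeaf G w → w ≠ v₁ → (w ∈ side G' x y ↔ w ∈ side G x y))
    (htwin : v₁ ∈ side G x y → v₂ ∈ side G x y) (hv₂ : IsLeaf G v₂) (hne : v₁ ≠ v₂)
    (hlab : ψ v₁ = ψ v₂) : sideLabels G' ψ x y = sideLabels G ψ x y := by
  ext m
  constructor
  · rintro ⟨w, hw, hs, rfl⟩
    obtain ⟨hw, hwv⟩ := (hleaf w).mp hw
    exact ⟨w, hw, (hside w hw hwv).mp hs, rfl⟩
  · rintro ⟨w, hw, hs, rfl⟩
    by_cases hwv : w = v₁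
    · subst hwv
      exact ⟨v₂, (hleaf v₂).mpr ⟨hv₂, hne.symm⟩, (hside v₂ hv₂ hne.symm).mpr (htwin hs), hlab.symm⟩
    · exact ⟨w, (hleaf w).mpr ⟨hw, hwv⟩, (hside w hw hwv).mpr hs, rfl⟩

theorem mem_side_of_common_neighbor {a b u x y : V} (ha : G.Adj a u) (hb : G.Adj b u)
    (hau : s(a, u) ≠ s(x, y)) (hbu : s(b, u) ≠ s(x, y)) (h : a ∈ side G x y) :
    b ∈ side G x y :=
  (deleteEdges_adj.mpr ⟨hb, hbu⟩ : (G.deleteEdges _).Adj b u).reachable.trans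
    ((deleteEdges_adj.mpr ⟨ha, hau⟩ : (G.deleteEdges _).Adj a u).reachable.symm.trans h)

theorem not_isLeaf_of_adj_of_adj {u v₁ v₂ : V} (hne : v₁ ≠ v₂) (h₁ : G.Adj u v₁)
    (h₂ : G.Adj u v₂) : ¬ IsLeaf G u := by
  intro h
  obtain ⟨a, ha⟩ := Set.ncard_eq_one.mp h
  have h₁' : v₁ ∈ G.neighborSet u := h₁
  have h₂' : v₂ ∈ G.neighborSet u := h₂
  rw [ha, Set.mem_singleton_iff] at h₁' h₂'
  exact hne (h₁'.trans h₂'.symm)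

theorem isLeaf_deleteEdges_pendant_iff {v u w : V} (hN : G.neighborSet v = {u})
    (hdeg : 3 ≤ deg G u) :
    IsLeaf (G.deleteEdges {s(u, v)}) w ↔ IsLeaf G w ∧ w ≠ v := by
  have hadj : ∀ y, G.Adj v y ↔ y = u := fun y => Set.ext_iff.mp hN y
  unfold IsLeaf deg
  by_cases hwv : w = v
  · subst hwv
    have : (G.deleteEdges {s(u, w)}).neighborSet w = ∅ := by
      ext y
      simp only [mem_neighborSet, deleteEdges_adj, hadj, Set.mem_singleton_iff,
        Set.mem_empty_iff_false, iff_false, not_and, not_not]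
      rintro rfl
      exact Sym2.eq_swap
    simp [this]
  by_cases hwu : w = u
  · subst hwu
    have : (G.deleteEdges {s(w, v)}).neighborSet w = G.neighborSet w \ {v} := by
      ext y
      simp only [mem_neighborSet, deleteEdges_adj, Set.mem_singleton_iff, Set.mem_sdiff,
        Sym2.eq_iff]
      grind
    rw [this, Set.ncard_sdiff_singleton_of_mem (show v ∈ G.neighborSet w from
      ((hadj w).mpr rfl).symm)]
    unfold deg at hdeg
    omega
  · have : (G.deleteEdges {s(u, v)}).neighborSet w = G.neighborSet w := by
      ext y
      simp only [mem_neighborSet, deleteEdges_adj, Set.mem_singleton_iff, Sym2.eq_iff]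
      grind
    rw [this]
    tauto

theorem mem_side_deleteEdges_pendant_iff {v u x y w : V} (hN : G.neighborSet v ⊆ {u})
    (hx : x ≠ v) (hw : w ≠ v) :
    w ∈ side (G.deleteEdges {s(u, v)}) x y ↔ w ∈ side G x y := by
  classical
  refine reachable_iff_of_retraction (Function.update id v u) (fun a b hab => ?_)
    (fun a b hab => ?_) (Function.update_of_ne hw _ _) (Function.update_of_ne hx _ _)
  · rw [deleteEdges_adj, Set.mem_singleton_iff] at hab
    by_cases ha : a = v
    · subst ha
      obtain rfl : b = u := hN hab.1
      simp [Function.update_of_ne hab.1.ne.symm]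
    by_cases hb : b = v
    · subst hb
      obtain rfl : a = u := hN hab.1.symm
      simp [Function.update_of_ne hab.1.ne]
    simp only [Function.update_of_ne ha, Function.update_of_ne hb, id]
    refine Adj.reachable (deleteEdges_adj.mpr ⟨deleteEdges_adj.mpr ⟨hab.1, ?_⟩, hab.2⟩)
    rw [Set.mem_singleton_iff, Sym2.eq_iff]
    tauto
  · rw [deleteEdges_adj, deleteEdges_adj] at hab
    exact Adj.reachable (deleteEdges_adj.mpr ⟨hab.1.1, hab.2⟩)

theorem infoContent_deleteEdges_twin {v₁ v₂ u : V} (hne : v₁ ≠ v₂) (hlab : ψ v₁ = ψ v₂)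
    (hN₁ : G.neighborSet v₁ = {u}) (hN₂ : G.neighborSet v₂ = {u}) (hdeg : 3 ≤ deg G u) :
    infoContent (G.deleteEdges {s(u, v₁)}) ψ = infoContent G ψ := by
  set G' := G.deleteEdges {s(u, v₁)}
  have hadj₁ : ∀ y, G.Adj v₁ y ↔ y = u := fun y => Set.ext_iff.mp hN₁ y
  have hadj₂ : ∀ y, G.Adj v₂ y ↔ y = u := fun y => Set.ext_iff.mp hN₂ y
  have hle : G' ≤ G := deleteEdges_le _
  have hkept : ∀ x y, G.Adj x y → x ≠ v₁ → x ≠ v₂ → y ≠ v₁ → y ≠ v₂ →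
      G'.Adj x y ∧ sideLabels G' ψ x y = sideLabels G ψ x y := by
    intro x y hxy hx₁ hx₂ hy₁ hy₂
    refine ⟨deleteEdges_adj.mpr ⟨hxy, ?_⟩, sideLabels_eq_of_twin
      (fun w => isLeaf_deleteEdges_pendant_iff hN₁ hdeg)
      (fun w _ hw => mem_side_deleteEdges_pendant_iff hN₁.subset hx₁ hw)
      (mem_side_of_common_neighbor ((hadj₁ u).mpr rfl) ((hadj₂ u).mpr rfl) ?_ ?_)
      (by simp [IsLeaf, deg, hN₂]) hne hlab⟩ <;>
    simp only [Set.mem_singleton_iff, ne_eq, Sym2.eq_iff] <;> tauto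
  have hpendant : ∀ H ≤ G, ∀ x y, H.Adj x y → x = v₁ ∨ x = v₂ →
      (sideLabels H ψ x y).Subsingleton := by
    rintro H hH x y hxy hx
    refine sideLabels_subsingleton_of_neighborSet_subset fun z hz => ?_
    rcases hx with rfl | rfl
    · rw [Set.mem_singleton_iff, (hadj₁ z).mp (hH hz), ← (hadj₁ y).mp (hH hxy)]
    · rw [Set.mem_singleton_iff, (hadj₂ z).mp (hH hz), ← (hadj₂ y).mp (hH hxy)]
  have hoff : ∀ H ≤ G, ∀ x y, H.Adj x y → (sideLabels H ψ x y).Nontrivial →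
      (sideLabels H ψ y x).Nontrivial → x ≠ v₁ ∧ x ≠ v₂ ∧ y ≠ v₁ ∧ y ≠ v₂ := by
    intro H hH x y hxy hnx hny
    have hx := fun h => hnx.not_subsingleton (hpendant H hH x y hxy h)
    have hy := fun h => hny.not_subsingleton (hpendant H hH y x hxy.symm h)
    tauto
  apply subset_antisymm
  · refine infoContent_subset_of_forall_adj fun x y hxy hnx hny => ?_
    obtain ⟨hx₁, hx₂, hy₁, hy₂⟩ := hoff G' hle x y hxy hnx hny
    exact ⟨hle hxy, (hkept x y (hle hxy) hx₁ hx₂ hy₁ hy₂).2.symm⟩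
  · refine infoContent_subset_of_forall_adj fun x y hxy hnx hny => ?_
    obtain ⟨hx₁, hx₂, hy₁, hy₂⟩ := hoff G le_rfl x y hxy hnx hny
    exact hkept x y hxy hx₁ hx₂ hy₁ hy₂

theorem adj_suppress_iff {v₁ v₂ u t : V} (hNu : G.neighborSet u = {v₁, v₂, t})
    (ht₂ : t ≠ v₂) {a b : V} :
    (G.deleteEdges {s(u, v₁), s(u, v₂), s(u, t)} ⊔ fromEdgeSet {s(v₂, t)}).Adj a b ↔
      (G.Adj a b ∧ a ≠ u ∧ b ≠ u) ∨ s(a, b) = s(v₂, t) := by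
  have hadjU : ∀ y, G.Adj u y ↔ y = v₁ ∨ y = v₂ ∨ y = t := fun y => by
    simpa using Set.ext_iff.mp hNu y
  simp only [sup_adj, deleteEdges_adj, fromEdgeSet_adj, Set.mem_insert_iff,
    Set.mem_singleton_iff, Sym2.eq_iff]
  have := G.adj_comm a u
  have := G.adj_comm b u
  grind

theorem deg_suppress_eq {v₁ v₂ u t w : V} (ht₂ : t ≠ v₂) (hN₂ : G.neighborSet v₂ = {u})
    (hNu : G.neighborSet u = {v₁, v₂, t}) (hwu : w ≠ u) (hw₁ : w ≠ v₁) :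
    deg (G.deleteEdges {s(u, v₁), s(u, v₂), s(u, t)} ⊔ fromEdgeSet {s(v₂, t)}) w = deg G w := by
  set G' := G.deleteEdges {s(u, v₁), s(u, v₂), s(u, t)} ⊔ fromEdgeSet {s(v₂, t)}
  have hadj' : ∀ a b, G'.Adj a b ↔ (G.Adj a b ∧ a ≠ u ∧ b ≠ u) ∨ s(a, b) = s(v₂, t) :=
    fun a b => adj_suppress_iff hNu ht₂
  have hadjU : ∀ y, G.Adj u y ↔ y = v₁ ∨ y = v₂ ∨ y = t := fun y => by
    simpa using Set.ext_iff.mp hNu y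
  have hadj₂ : ∀ y, G.Adj v₂ y ↔ y = u := fun y => Set.ext_iff.mp hN₂ y
  unfold deg
  by_cases hw₂ : w = v₂
  · subst hw₂
    have : G'.neighborSet w = {t} := by
      ext y
      simp only [mem_neighborSet, hadj', Sym2.eq_iff, Set.mem_singleton_iff]
      grind
    simp [this, hN₂]
  by_cases hwt : w = t
  · subst hwt
    have : G'.neighborSet w = insert v₂ (G.neighborSet w \ {u}) := by
      ext y
      simp only [mem_neighborSet, hadj', Sym2.eq_iff, Set.mem_insert_iff, Set.mem_sdiff,
        Set.mem_singleton_iff]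
      grind
    rw [this, Set.ncard_exchange (fun h : v₂ ∈ G.neighborSet w => hwu ((hadj₂ w).mp h.symm))
      (((hadjU w).mpr (by simp)).symm)]
  · congr 1
    ext y
    simp only [mem_neighborSet, hadj', Sym2.eq_iff]
    have := G.adj_comm w u
    grind

theorem isLeaf_suppress_iff {v₁ v₂ u t w : V} (hne : v₁ ≠ v₂) (ht₁ : t ≠ v₁)
    (ht₂ : t ≠ v₂) (hN₁ : G.neighborSet v₁ = {u}) (hN₂ : G.neighborSet v₂ = {u})
    (hNu : G.neighborSet u = {v₁, v₂, t}) :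
    IsLeaf (G.deleteEdges {s(u, v₁), s(u, v₂), s(u, t)} ⊔ fromEdgeSet {s(v₂, t)}) w ↔
      IsLeaf G w ∧ w ≠ v₁ := by
  by_cases hw : w = u ∨ w = v₁
  · have hadj₁ : ∀ y, G.Adj v₁ y ↔ y = u := fun y => Set.ext_iff.mp hN₁ y
    have htu : G.Adj u t := show t ∈ G.neighborSet u by simp [hNu]
    have hempty : (G.deleteEdges {s(u, v₁), s(u, v₂), s(u, t)} ⊔
        fromEdgeSet {s(v₂, t)}).neighborSet w = ∅ := by
      ext y
      simp only [mem_neighborSet, adj_suppress_iff hNu ht₂, Sym2.eq_iff,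
        Set.mem_empty_iff_false, iff_false]
      grind [htu.ne]
    have hu : ¬ IsLeaf G u := not_isLeaf_of_adj_of_adj hne
      (show v₁ ∈ G.neighborSet u by simp [hNu]) (show v₂ ∈ G.neighborSet u by simp [hNu])
    refine iff_of_false (by simp [IsLeaf, deg, hempty]) fun h => ?_
    rcases hw with rfl | rfl
    exacts [hu h.1, h.2 rfl]
  · rw [not_or] at hw
    rw [IsLeaf, IsLeaf, deg_suppress_eq ht₂ hN₂ hNu hw.1 hw.2]
    tauto

theorem reachable_retract_suppress [DecidableEq V] {v₁ v₂ u t x y a b : V} (ht₂ : t ≠ v₂)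
    (hN₁ : G.neighborSet v₁ = {u}) (hNu : G.neighborSet u = {v₁, v₂, t}) (hx₂ : x ≠ v₂)
    (hy₂ : y ≠ v₂) (hab : (G.deleteEdges {s(x, y)}).Adj a b) :
    ((G.deleteEdges {s(u, v₁), s(u, v₂), s(u, t)} ⊔ fromEdgeSet {s(v₂, t)}).deleteEdges
      {s(x, y)}).Reachable (if a = u ∨ a = v₁ then v₂ else a)
        (if b = u ∨ b = v₁ then v₂ else b) := by
  have hadjU : ∀ y, G.Adj u y ↔ y = v₁ ∨ y = v₂ ∨ y = t := fun y => by
    simpa using Set.ext_iff.mp hNu y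
  have hadj₁ : ∀ y, G.Adj v₁ y ↔ y = u := fun y => Set.ext_iff.mp hN₁ y
  have hone : ∀ a b, (G.deleteEdges {s(x, y)}).Adj a b → ¬ (b = u ∨ b = v₁) →
      ((G.deleteEdges {s(u, v₁), s(u, v₂), s(u, t)} ⊔ fromEdgeSet {s(v₂, t)}).deleteEdges
        {s(x, y)}).Reachable (if a = u ∨ a = v₁ then v₂ else a) b := by
    intro a b hab hb
    rw [deleteEdges_adj] at hab
    split_ifs with ha
    · rcases ha with rfl | rfl
      · rcases (hadjU b).mp hab.1 with rfl | rfl | rfl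
        · exact absurd (Or.inr rfl) hb
        · rfl
        · refine Adj.reachable
            (deleteEdges_adj.mpr ⟨(adj_suppress_iff hNu ht₂).mpr (Or.inr rfl), ?_⟩)
          rw [Set.mem_singleton_iff, Sym2.eq_iff]
          tauto
      · exact absurd (Or.inl ((hadj₁ b).mp hab.1)) hb
    · exact Adj.reachable (deleteEdges_adj.mpr ⟨(adj_suppress_iff hNu ht₂).mpr
        (Or.inl ⟨hab.1, (not_or.mp ha).1, (not_or.mp hb).1⟩), hab.2⟩)
  by_cases hb : b = u ∨ b = v₁
  · by_cases ha : a = u ∨ a = v₁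
    · simp only [if_pos ha, if_pos hb, Reachable.refl]
    · simpa only [if_pos hb, if_neg ha] using (hone b a hab.symm ha).symm
  · simpa only [if_neg hb] using hone a b hab hb

theorem mem_side_suppress_iff {v₁ v₂ u t x y w : V} (ht₂ : t ≠ v₂)
    (hN₁ : G.neighborSet v₁ = {u}) (hN₂ : G.neighborSet v₂ = {u})
    (hNu : G.neighborSet u = {v₁, v₂, t}) (hxy : G.Adj x y) (hxu : x ≠ u) (hyu : y ≠ u)
    (hwu : w ≠ u) (hw₁ : w ≠ v₁) :
    w ∈ side (G.deleteEdges {s(u, v₁), s(u, v₂), s(u, t)} ⊔ fromEdgeSet {s(v₂, t)}) x y ↔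
      w ∈ side G x y := by
  classical
  have hadj₁ : ∀ y, G.Adj v₁ y ↔ y = u := fun y => Set.ext_iff.mp hN₁ y
  have hadj₂ : ∀ y, G.Adj v₂ y ↔ y = u := fun y => Set.ext_iff.mp hN₂ y
  have hx₁ : x ≠ v₁ := fun h => hyu ((hadj₁ y).mp (h ▸ hxy))
  have hx₂ : x ≠ v₂ := fun h => hyu ((hadj₂ y).mp (h ▸ hxy))
  have hy₂ : y ≠ v₂ := fun h => hxu ((hadj₂ x).mp (h ▸ hxy.symm))
  have hpath : (G.deleteEdges {s(x, y)}).Reachable v₂ t := by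
    refine (Adj.reachable (deleteEdges_adj.mpr ⟨(hadj₂ u).mpr rfl, ?_⟩)).trans
      (Adj.reachable (deleteEdges_adj.mpr ⟨show t ∈ G.neighborSet u by simp [hNu], ?_⟩)) <;>
    rw [Set.mem_singleton_iff, Sym2.eq_iff] <;> tauto
  refine reachable_iff_of_retraction (fun w => if w = u ∨ w = v₁ then v₂ else w)
    (fun a b hab => reachable_retract_suppress ht₂ hN₁ hNu hx₂ hy₂ hab) (fun a b hab => ?_)
    (if_neg (by tauto)) (if_neg (by tauto))
  rw [deleteEdges_adj, adj_suppress_iff hNu ht₂] at hab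
  rcases hab with ⟨⟨h, -, -⟩ | h, hxy'⟩
  · exact Adj.reachable (deleteEdges_adj.mpr ⟨h, hxy'⟩)
  · rcases Sym2.eq_iff.mp h with ⟨rfl, rfl⟩ | ⟨rfl, rfl⟩
    exacts [hpath, hpath.symm]

theorem sideLabels_subsingleton_of_twins {v₁ v₂ u t : V} (hlab : ψ v₁ = ψ v₂)
    (hN₁ : G.neighborSet v₁ = {u}) (hN₂ : G.neighborSet v₂ = {u})
    (hNu : G.neighborSet u = {v₁, v₂, t}) (hu : ¬ IsLeaf G u) :
    (sideLabels G ψ u t).Subsingleton := by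
  have hadjU : ∀ y, G.Adj u y ↔ y = v₁ ∨ y = v₂ ∨ y = t := fun y => by
    simpa using Set.ext_iff.mp hNu y
  refine sideLabels_subsingleton (ψ v₂) {u, v₁, v₂} ?_ (by simp) ?_
  · intro a b hab ha
    rw [deleteEdges_adj, Set.mem_singleton_iff] at hab
    simp only [Set.mem_insert_iff, Set.mem_singleton_iff] at ha ⊢
    rcases ha with rfl | rfl | rfl
    · rcases (hadjU b).mp hab.1 with rfl | rfl | rfl
      exacts [Or.inr (Or.inl rfl), Or.inr (Or.inr rfl), absurd rfl hab.2]
    · exact Or.inl (hN₁.subset hab.1)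
    · exact Or.inl (hN₂.subset hab.1)
  · rintro w (rfl | rfl | rfl) hw
    exacts [absurd hw hu, hlab, rfl]

theorem sideLabels_suppress_twin {v₁ v₂ u t x y : V} (hne : v₁ ≠ v₂) (ht₁ : t ≠ v₁)
    (ht₂ : t ≠ v₂) (hlab : ψ v₁ = ψ v₂) (hN₁ : G.neighborSet v₁ = {u})
    (hN₂ : G.neighborSet v₂ = {u}) (hNu : G.neighborSet u = {v₁, v₂, t}) (hu : ¬ IsLeaf G u)
    (hxy : G.Adj x y) (hxu : x ≠ u) (hyu : y ≠ u) :
    sideLabels (G.deleteEdges {s(u, v₁), s(u, v₂), s(u, t)} ⊔ fromEdgeSet {s(v₂, t)}) ψ x y =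
      sideLabels G ψ x y :=
  sideLabels_eq_of_twin (fun _ => isLeaf_suppress_iff hne ht₁ ht₂ hN₁ hN₂ hNu)
    (fun _ hw hw₁ => mem_side_suppress_iff ht₂ hN₁ hN₂ hNu hxy hxu hyu (fun h => hu (h ▸ hw)) hw₁)
    (mem_side_of_common_neighbor (hN₁.symm.subset rfl) (hN₂.symm.subset rfl)
      (by rw [ne_eq, Sym2.eq_iff]; tauto) (by rw [ne_eq, Sym2.eq_iff]; tauto))
    (by simp [IsLeaf, deg, hN₂]) hne hlab

theorem infoContent_suppress_twin {v₁ v₂ u t : V} (hne : v₁ ≠ v₂) (ht₁ : t ≠ v₁)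
    (ht₂ : t ≠ v₂) (hlab : ψ v₁ = ψ v₂) (hN₁ : G.neighborSet v₁ = {u})
    (hN₂ : G.neighborSet v₂ = {u}) (hNu : G.neighborSet u = {v₁, v₂, t}) :
    infoContent (G.deleteEdges {s(u, v₁), s(u, v₂), s(u, t)} ⊔ fromEdgeSet {s(v₂, t)}) ψ =
      infoContent G ψ := by
  set G' := G.deleteEdges {s(u, v₁), s(u, v₂), s(u, t)} ⊔ fromEdgeSet {s(v₂, t)}
  have hadj' : ∀ a b, G'.Adj a b ↔ (G.Adj a b ∧ a ≠ u ∧ b ≠ u) ∨ s(a, b) = s(v₂, t) :=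
    fun a b => adj_suppress_iff hNu ht₂
  have hadjU : ∀ y, G.Adj u y ↔ y = v₁ ∨ y = v₂ ∨ y = t := fun y => by
    simpa using Set.ext_iff.mp hNu y
  have hu : ¬ IsLeaf G u :=
    not_isLeaf_of_adj_of_adj hne ((hadjU v₁).mpr (by simp)) ((hadjU v₂).mpr (by simp))
  have hpend₂' : (sideLabels G' ψ v₂ t).Subsingleton := by
    refine sideLabels_subsingleton_of_neighborSet_subset fun b hb => ?_
    rcases (hadj' v₂ b).mp hb with ⟨h, -, hbu⟩ | h
    · exact absurd (hN₂.subset h) hbu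
    · exact Sym2.congr_right.mp h
  have hoff : ∀ x y, G.Adj x y → (sideLabels G ψ x y).Nontrivial →
      (sideLabels G ψ y x).Nontrivial → x ≠ u := by
    rintro x y hxy hnx hny rfl
    rcases (hadjU y).mp hxy with rfl | rfl | rfl
    · exact hny.not_subsingleton (sideLabels_subsingleton_of_neighborSet_subset hN₁.subset)
    · exact hny.not_subsingleton (sideLabels_subsingleton_of_neighborSet_subset hN₂.subset)
    · exact hnx.not_subsingleton (sideLabels_subsingleton_of_twins hlab hN₁ hN₂ hNu hu)
  apply subset_antisymm
  · refine infoContent_subset_of_forall_adj fun x y hxy hnx hny => ?_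
    rcases (hadj' x y).mp hxy with ⟨h, hxu, hyu⟩ | h
    · exact ⟨h, (sideLabels_suppress_twin hne ht₁ ht₂ hlab hN₁ hN₂ hNu hu h hxu hyu).symm⟩
    · rcases Sym2.eq_iff.mp h with ⟨rfl, rfl⟩ | ⟨rfl, rfl⟩
      exacts [absurd hpend₂' hnx.not_subsingleton, absurd hpend₂' hny.not_subsingleton]
  · refine infoContent_subset_of_forall_adj fun x y hxy hnx hny => ?_
    have hxu := hoff x y hxy hnx hny
    have hyu := hoff y x hxy.symm hny hnx
    exact ⟨(hadj' x y).mpr (Or.inl ⟨hxy, hxu, hyu⟩),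
      sideLabels_suppress_twin hne ht₁ ht₂ hlab hN₁ hN₂ hNu hu hxy hxu hyu⟩

theorem neighborSet_eq_singleton_of_isLeaf {v u : V} (h : IsLeaf G v) (hadj : G.Adj v u) :
    G.neighborSet v = {u} := by
  obtain ⟨a, ha⟩ := Set.ncard_eq_one.mp h
  have hu : u ∈ G.neighborSet v := hadj
  rw [ha, Set.mem_singleton_iff] at hu
  rw [ha, hu]

theorem exists_pruneSpec {v : V} (h : IsLeaf G v) : ∃ G', PruneSpec G v G' := by
  obtain ⟨u, hu⟩ := Set.ncard_eq_one.mp h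
  by_cases hdeg : deg G u = 3
  · obtain ⟨a, b, c, hab, hac, hbc, habc⟩ := Set.ncard_eq_three.mp hdeg
    have hv : v ∈ G.neighborSet u := (show u ∈ G.neighborSet v by simp [hu]).symm
    rw [habc] at hv
    rcases hv with rfl | rfl | rfl
    · exact ⟨_, u, hu, Or.inr ⟨hdeg, b, c, hbc, hab.symm, hac.symm, habc, rfl⟩⟩
    · rw [Set.insert_comm] at habc
      exact ⟨_, u, hu, Or.inr ⟨hdeg, a, c, hac, hab, hbc.symm, habc, rfl⟩⟩
    · rw [Set.pair_comm, Set.insert_comm] at habc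
      exact ⟨_, u, hu, Or.inr ⟨hdeg, a, b, hab, hac, hbc, habc, rfl⟩⟩
  · exact ⟨_, u, hu, Or.inl ⟨hdeg, rfl⟩⟩

theorem infoContent_eq_of_pruneSpec_twin {v₁ v₂ u : V} (hne : v₁ ≠ v₂)
    (hlab : ψ v₁ = ψ v₂) (hN₁ : G.neighborSet v₁ = {u}) (hN₂ : G.neighborSet v₂ = {u})
    (hdeg : 3 ≤ deg G u) (hG' : PruneSpec G v₁ G') : infoContent G' ψ = infoContent G ψ := by
  obtain ⟨u', hu', hG'⟩ := hG'
  obtain rfl : u = u' := Set.singleton_eq_singleton_iff.mp (hN₁.symm.trans hu')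
  rcases hG' with ⟨-, rfl⟩ | ⟨-, p, q, hpq, hp, hq, hNu, rfl⟩
  · exact infoContent_deleteEdges_twin hne hlab hN₁ hN₂ hdeg
  have hv₂ : v₂ ∈ G.neighborSet u := (show u ∈ G.neighborSet v₂ by simp [hN₂]).symm
  rw [hNu] at hv₂
  rcases hv₂ with rfl | rfl | rfl
  · exact absurd rfl hne
  · exact infoContent_suppress_twin hne hq hpq.symm hlab hN₁ hN₂ hNu
  · rw [Set.pair_comm] at hNu
    rw [Set.pair_comm (s(u, p)), Sym2.eq_swap (a := p)]
    exact infoContent_suppress_twin hne hp hpq hlab hN₁ hN₂ hNu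

end

/-- If two distinct leaves carry the same label and have a common
neighbor (the same pendant node), then deleting one of them yields a tree with
the same information content; in particular each such leaf is prunable. -/
theorem stmt18 (T : MulTree V L) (v₁ v₂ u : V)
    (h₁ : IsLeaf T.G v₁) (h₂ : IsLeaf T.G v₂) (hne : v₁ ≠ v₂)
    (hlab : T.ψ v₁ = T.ψ v₂) (ha₁ : T.G.Adj u v₁) (ha₂ : T.G.Adj u v₂) :
    (∀ G', PruneSpec T.G v₁ G' → infoContent G' T.ψ = infoContent T.G T.ψ) ∧
    Prunable T.G T.ψ v₁ := by
  have hdeg : 3 ≤ deg T.G u := T.internal3 u ⟨v₁, ha₁⟩ (not_isLeaf_of_adj_of_adj hne ha₁ ha₂)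
  have hprune : ∀ G', PruneSpec T.G v₁ G' → infoContent G' T.ψ = infoContent T.G T.ψ :=
    fun G' => infoContent_eq_of_pruneSpec_twin hne hlab
      (neighborSet_eq_singleton_of_isLeaf h₁ ha₁.symm)
      (neighborSet_eq_singleton_of_isLeaf h₂ ha₂.symm) hdeg
  obtain ⟨G', hG'⟩ := exists_pruneSpec h₁
  exact ⟨hprune, h₁, G', hG', hprune G' hG'⟩
end
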